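/- arXiv:1010.5578 — 7 statements merged into one kernel-verified Lean document; each statement's English description precedes it below -/
import Mathlib

section
/- Let O ⊆ ℝⁿ be an open set, let σ : O → ℝ be twice continuously differentiable with σ(x) > 0 for every x ∈ O, and let u : O → ℂ be twice continuously differentiable. Then for every x ∈ O one has the gauge-transformation identity σ(x)^{-1/2} · ∑_{i=1}^n ∂_i( σ · ∂_i( σ^{-1/2} u ) )(x) = Δu(x) − ( σ(x)^{-1/2} · Δ(σ^{1/2})(x) ) · u(x), where ∂_i denotes the partial derivative in the i-th standard coordinate direction and Δ = ∑_{i=1}^n ∂_i∂_i is the Euclidean Laplacian. -/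
open scoped BigOperators

/-- Partial derivative of a complex-valued function on `ℝⁿ` in the `i`-th standard
coordinate direction. -/
noncomputable def pdC {n : ℕ} (i : Fin n) (f : EuclideanSpace ℝ (Fin n) → ℂ)
    (x : EuclideanSpace ℝ (Fin n)) : ℂ :=
  fderiv ℝ f x (EuclideanSpace.single i 1)

/-- Partial derivative of a real-valued function on `ℝⁿ` in the `i`-th standard
coordinate direction. -/
noncomputable def pdR {n : ℕ} (i : Fin n) (f : EuclideanSpace ℝ (Fin n) → ℝ)
    (x : EuclideanSpace ℝ (Fin n)) : ℝ :=
  fderiv ℝ f x (EuclideanSpace.single i 1)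

/-- Euclidean Laplacian of a complex-valued function. -/
noncomputable def lapC {n : ℕ} (f : EuclideanSpace ℝ (Fin n) → ℂ)
    (x : EuclideanSpace ℝ (Fin n)) : ℂ :=
  ∑ i : Fin n, pdC i (fun y => pdC i f y) x

/-- Euclidean Laplacian of a real-valued function. -/
noncomputable def lapR {n : ℕ} (f : EuclideanSpace ℝ (Fin n) → ℝ)
    (x : EuclideanSpace ℝ (Fin n)) : ℝ :=
  ∑ i : Fin n, pdR i (fun y => pdR i f y) x

/-!
With `s = σ^{1/2}`, the quotient rule gives `σ ∂ᵢ(s⁻¹ u) = s ∂ᵢu - (∂ᵢs) u` on `O`. The right-hand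
side is a Wronskian, so differentiating it once more the cross terms `∂ᵢs ∂ᵢu` cancel and
`∂ᵢ(σ ∂ᵢ(s⁻¹ u)) = s ∂ᵢ²u - (∂ᵢ²s) u`. Summing over `i` and dividing by `s` gives the identity.
-/

section DirectionalDerivatives

variable {E F : Type*} [NormedAddCommGroup E] [NormedSpace ℝ E]
  [NormedAddCommGroup F] [NormedSpace ℝ F]

theorem ContDiffAt.differentiableAt_fderiv_apply {f : E → F} {x : E}
    (hf : ContDiffAt ℝ 2 f x) (v : E) :
    DifferentiableAt ℝ (fun y => fderiv ℝ f y v) x :=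
  ((hf.fderiv_right (m := 1) le_rfl).clm_apply contDiffAt_const).differentiableAt one_ne_zero

theorem fderiv_smul_apply {c : E → ℝ} {f : E → F} {x : E}
    (hc : DifferentiableAt ℝ c x) (hf : DifferentiableAt ℝ f x) (v : E) :
    fderiv ℝ (fun y => c y • f y) x v = c x • fderiv ℝ f x v + fderiv ℝ c x v • f x := by
  rw [fderiv_fun_smul hc hf]
  rfl

theorem sq_smul_fderiv_inv_smul_apply {s : E → ℝ} {u : E → F} {y : E}
    (hs : DifferentiableAt ℝ s y) (hu : DifferentiableAt ℝ u y) (hsy : s y ≠ 0) (v : E) :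
    s y ^ 2 • fderiv ℝ (fun z => (s z)⁻¹ • u z) y v
      = s y • fderiv ℝ u y v - fderiv ℝ s y v • u y := by
  have hinv : fderiv ℝ (fun z => (s z)⁻¹) y v = -(s y ^ 2)⁻¹ * fderiv ℝ s y v := by
    rw [fderiv_fun_comp y (differentiableAt_inv hsy) hs, fderiv_inv]
    simp [mul_comm]
  rw [fderiv_smul_apply (hs.fun_inv hsy) hu, hinv, smul_add, smul_smul, smul_smul,
    sub_eq_add_neg, ← neg_smul]
  congr 2 <;> field_simp

theorem fderiv_wronskian_apply {s : E → ℝ} {u : E → F} {x : E} {v : E}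
    (hs : DifferentiableAt ℝ s x) (hu : DifferentiableAt ℝ u x)
    (hs' : DifferentiableAt ℝ (fun y => fderiv ℝ s y v) x)
    (hu' : DifferentiableAt ℝ (fun y => fderiv ℝ u y v) x) :
    fderiv ℝ (fun y => s y • fderiv ℝ u y v - fderiv ℝ s y v • u y) x v
      = s x • fderiv ℝ (fun y => fderiv ℝ u y v) x v
        - fderiv ℝ (fun y => fderiv ℝ s y v) x v • u x := by
  rw [fderiv_fun_sub (hs.fun_smul hu') (hs'.fun_smul hu), sub_apply,
    fderiv_smul_apply hs hu', fderiv_smul_apply hs' hu]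
  abel

end DirectionalDerivatives

/-- The gauge transformation identity
`σ^{-1/2} ∑ᵢ ∂ᵢ(σ ∂ᵢ(σ^{-1/2} u)) = Δu − (σ^{-1/2} Δ(σ^{1/2})) u` on an open set. -/
theorem gauge_transformation_identity
    {n : ℕ} (O : Set (EuclideanSpace ℝ (Fin n))) (hO : IsOpen O)
    (σ : EuclideanSpace ℝ (Fin n) → ℝ) (u : EuclideanSpace ℝ (Fin n) → ℂ)
    (hσ : ContDiffOn ℝ 2 σ O) (hσpos : ∀ x ∈ O, 0 < σ x)
    (hu : ContDiffOn ℝ 2 u O) :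
    ∀ x ∈ O,
      ((Real.sqrt (σ x))⁻¹ : ℂ) *
          ∑ i : Fin n,
            pdC i (fun y => ((σ y : ℝ) : ℂ) *
              pdC i (fun z => (((Real.sqrt (σ z))⁻¹ : ℝ) : ℂ) * u z) y) x
        = lapC u x -
            ((((Real.sqrt (σ x))⁻¹ * lapR (fun y => Real.sqrt (σ y)) x : ℝ)) : ℂ) * u x := by
  intro x hx
  set s := fun y => Real.sqrt (σ y)
  have hs : ∀ y ∈ O, ContDiffAt ℝ 2 s y := fun y hy =>
    ((hσ y hy).contDiffAt (hO.mem_nhds hy)).sqrt (hσpos y hy).ne'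
  have hu : ∀ y ∈ O, ContDiffAt ℝ 2 u y := fun y hy => (hu y hy).contDiffAt (hO.mem_nhds hy)
  have hsx : (s x : ℂ) ≠ 0 := by exact_mod_cast Real.sqrt_ne_zero'.mpr (hσpos x hx)
  have hflux : ∀ i : Fin n,
      (fun y => ((σ y : ℝ) : ℂ) * pdC i (fun z => (((s z)⁻¹ : ℝ) : ℂ) * u z) y)
        =ᶠ[nhds x] fun y => s y • pdC i u y - pdR i s y • u y := by
    intro i
    filter_upwards [hO.mem_nhds hx] with y hy
    simp only [← Complex.real_smul]
    rw [← Real.sq_sqrt (hσpos y hy).le]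
    exact sq_smul_fderiv_inv_smul_apply ((hs y hy).differentiableAt two_ne_zero)
      ((hu y hy).differentiableAt two_ne_zero) (Real.sqrt_ne_zero'.mpr (hσpos y hy)) _
  have hterm : ∀ i : Fin n,
      pdC i (fun y => ((σ y : ℝ) : ℂ) * pdC i (fun z => (((s z)⁻¹ : ℝ) : ℂ) * u z) y) x
        = s x • pdC i (fun y => pdC i u y) x - pdR i (fun y => pdR i s y) x • u x := by
    intro i
    rw [pdC, (hflux i).fderiv_eq]
    exact fderiv_wronskian_apply ((hs x hx).differentiableAt two_ne_zero)
      ((hu x hx).differentiableAt two_ne_zero) ((hs x hx).differentiableAt_fderiv_apply _)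
      ((hu x hx).differentiableAt_fderiv_apply _)
  rw [Finset.sum_congr rfl fun i _ => hterm i, Finset.sum_sub_distrib, ← Finset.smul_sum,
    ← Finset.sum_smul, ← lapC, ← lapR, Complex.real_smul, Complex.real_smul]
  push_cast
  simp only [show Real.sqrt (σ x) = s x from rfl]
  field_simp
end

section
/- Let O ⊆ ℝⁿ be an open set, let σ₀ : O → ℝ be twice continuously differentiable with σ₀(x) > 0 for every x ∈ O, let η₀ : O → ℝ be continuous, let ω > 0, and let u : O → ℂ be twice continuously differentiable satisfying ∑_{i=1}^n ∂_i(σ₀ ∂_i u)(x) + ω² η₀(x) u(x) = 0 for all x ∈ O. Then the function v = σ₀^{1/2} u satisfies Δv(x) + ω² q(x) v(x) = 0 for all x ∈ O, where q = σ₀^{-1} η₀ − ω^{-2} γ₀ and γ₀ = σ₀^{-1/2} Δ(σ₀^{1/2}). -/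
open scoped BigOperators

/-!
Write `s = σ₀^{1/2}`, so that `σ₀ = s²` on `O`. The Leibniz rule gives
`Δ(s u) = (Δs) u + 2 ∇s·∇u + s Δu` and `∇·(s² ∇u) = 2 s ∇s·∇u + s² Δu`, hence
`s Δ(s u) = s (Δs) u + ∇·(σ₀ ∇u) = s (Δs) u - ω² η₀ u`. Dividing by `s > 0` is exactly the
claimed equation, since `ω² q s u = ω² η₀ u / s - (Δs) u`.
-/

section PartialDerivatives

variable {n : ℕ} (i : Fin n) {x : EuclideanSpace ℝ (Fin n)}

theorem pdC_congr_of_eventuallyEq {f g : EuclideanSpace ℝ (Fin n) → ℂ}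
    (h : f =ᶠ[nhds x] g) : pdC i f x = pdC i g x := by
  rw [pdC, pdC, h.fderiv_eq]

theorem pdC_add {f g : EuclideanSpace ℝ (Fin n) → ℂ}
    (hf : DifferentiableAt ℝ f x) (hg : DifferentiableAt ℝ g x) :
    pdC i (fun y => f y + g y) x = pdC i f x + pdC i g x := by
  rw [pdC, fderiv_fun_add hf hg]
  rfl

theorem pdC_ofReal_mul {f : EuclideanSpace ℝ (Fin n) → ℝ} {g : EuclideanSpace ℝ (Fin n) → ℂ}
    (hf : DifferentiableAt ℝ f x) (hg : DifferentiableAt ℝ g x) :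
    pdC i (fun y => (f y : ℂ) * g y) x = (pdR i f x : ℂ) * g x + (f x : ℂ) * pdC i g x := by
  have hderiv : HasFDerivAt (fun y => (f y : ℂ)) (Complex.ofRealCLM.comp (fderiv ℝ f x)) x :=
    Complex.ofRealCLM.hasFDerivAt.comp x hf.hasFDerivAt
  unfold pdC pdR
  rw [fderiv_fun_mul hderiv.differentiableAt hg, hderiv.fderiv]
  simp only [add_apply, smul_apply, smul_eq_mul,
    ContinuousLinearMap.comp_apply, Complex.ofRealCLM_apply]
  ring

theorem pdR_sq {s : EuclideanSpace ℝ (Fin n) → ℝ} (hs : DifferentiableAt ℝ s x) :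
    pdR i (fun y => s y ^ 2) x = 2 * s x * pdR i s x := by
  rw [pdR, fderiv_fun_pow 2 hs]
  simp [pdR, mul_assoc]

theorem ContDiffAt.differentiableAt_pdC {u : EuclideanSpace ℝ (Fin n) → ℂ}
    (hu : ContDiffAt ℝ 2 u x) : DifferentiableAt ℝ (fun y => pdC i u y) x := by
  exact (ContinuousLinearMap.apply ℝ ℂ (EuclideanSpace.single i 1)).differentiableAt.comp x
    ((hu.fderiv_right (by norm_num)).differentiableAt one_ne_zero)

theorem ContDiffAt.differentiableAt_pdR {s : EuclideanSpace ℝ (Fin n) → ℝ}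
    (hs : ContDiffAt ℝ 2 s x) : DifferentiableAt ℝ (fun y => pdR i s y) x := by
  exact (ContinuousLinearMap.apply ℝ ℝ (EuclideanSpace.single i 1)).differentiableAt.comp x
    ((hs.fderiv_right (by norm_num)).differentiableAt one_ne_zero)

end PartialDerivatives

section Leibniz

variable {n : ℕ} {x : EuclideanSpace ℝ (Fin n)} {s : EuclideanSpace ℝ (Fin n) → ℝ}
  {u : EuclideanSpace ℝ (Fin n) → ℂ}

theorem pdC_pdC_ofReal_mul (i : Fin n) (hs : ContDiffAt ℝ 2 s x) (hu : ContDiffAt ℝ 2 u x) :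
    pdC i (fun y => pdC i (fun z => (s z : ℂ) * u z) y) x
      = (pdR i (fun y => pdR i s y) x : ℂ) * u x + 2 * (pdR i s x : ℂ) * pdC i u x
        + (s x : ℂ) * pdC i (fun y => pdC i u y) x := by
  have hs₁ : DifferentiableAt ℝ s x := hs.differentiableAt two_ne_zero
  have hu₁ : DifferentiableAt ℝ u x := hu.differentiableAt two_ne_zero
  have hfirst : (fun y => pdC i (fun z => (s z : ℂ) * u z) y)
      =ᶠ[nhds x] fun y => (pdR i s y : ℂ) * u y + (s y : ℂ) * pdC i u y := by
    filter_upwards [hs.eventually (by simp), hu.eventually (by simp)] with y hsy huy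
    exact pdC_ofReal_mul i (hsy.differentiableAt two_ne_zero) (huy.differentiableAt two_ne_zero)
  have hterm₁ : DifferentiableAt ℝ (fun y => (pdR i s y : ℂ) * u y) x :=
    (Complex.ofRealCLM.differentiableAt.comp x (hs.differentiableAt_pdR i)).mul hu₁
  have hterm₂ : DifferentiableAt ℝ (fun y => (s y : ℂ) * pdC i u y) x :=
    (Complex.ofRealCLM.differentiableAt.comp x hs₁).mul (hu.differentiableAt_pdC i)
  rw [pdC_congr_of_eventuallyEq i hfirst, pdC_add i hterm₁ hterm₂,
    pdC_ofReal_mul i (hs.differentiableAt_pdR i) hu₁,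
    pdC_ofReal_mul i hs₁ (hu.differentiableAt_pdC i)]
  ring

theorem lapC_ofReal_mul (hs : ContDiffAt ℝ 2 s x) (hu : ContDiffAt ℝ 2 u x) :
    lapC (fun y => (s y : ℂ) * u y) x
      = (lapR s x : ℂ) * u x + 2 * ∑ i : Fin n, (pdR i s x : ℂ) * pdC i u x
        + (s x : ℂ) * lapC u x := by
  simp only [lapC, lapR, pdC_pdC_ofReal_mul _ hs hu, Finset.sum_add_distrib, Complex.ofReal_sum,
    Finset.sum_mul, Finset.mul_sum, mul_assoc]

theorem sum_pdC_sq_mul_pdC (hs : DifferentiableAt ℝ s x) (hu : ContDiffAt ℝ 2 u x) :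
    ∑ i : Fin n, pdC i (fun y => ((s y ^ 2 : ℝ) : ℂ) * pdC i u y) x
      = 2 * (s x : ℂ) * ∑ i : Fin n, (pdR i s x : ℂ) * pdC i u x
        + (s x : ℂ) ^ 2 * lapC u x := by
  rw [Finset.sum_congr rfl fun i _ => pdC_ofReal_mul i (hs.fun_pow 2) (hu.differentiableAt_pdC i)]
  simp only [pdR_sq _ hs, lapC, Finset.sum_add_distrib, Finset.mul_sum, Complex.ofReal_mul,
    Complex.ofReal_pow, Complex.ofReal_ofNat, mul_assoc]

theorem ofReal_mul_lapC_ofReal_mul (hs : ContDiffAt ℝ 2 s x) (hu : ContDiffAt ℝ 2 u x) :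
    (s x : ℂ) * lapC (fun y => (s y : ℂ) * u y) x
      = (s x : ℂ) * (lapR s x : ℂ) * u x
        + ∑ i : Fin n, pdC i (fun y => ((s y ^ 2 : ℝ) : ℂ) * pdC i u y) x := by
  rw [lapC_ofReal_mul hs hu, sum_pdC_sq_mul_pdC (hs.differentiableAt two_ne_zero) hu]
  ring

end Leibniz

theorem gauge_transformed_helmholtz_general
    {n : ℕ} (O : Set (EuclideanSpace ℝ (Fin n))) (hO : IsOpen O)
    (σ₀ η₀ : EuclideanSpace ℝ (Fin n) → ℝ) (u : EuclideanSpace ℝ (Fin n) → ℂ)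
    (hσ₀ : ContDiffOn ℝ 2 σ₀ O) (hσ₀pos : ∀ x ∈ O, 0 < σ₀ x)
    (ω : ℝ) (hω : 0 < ω)
    (hu : ContDiffOn ℝ 2 u O)
    (huEq : ∀ x ∈ O,
      (∑ i : Fin n, pdC i (fun y => ((σ₀ y : ℝ) : ℂ) * pdC i u y) x)
        + ((ω ^ 2 * η₀ x : ℝ) : ℂ) * u x = 0) :
    ∀ x ∈ O,
      lapC (fun y => ((Real.sqrt (σ₀ y) : ℝ) : ℂ) * u y) x
        + ((ω ^ 2 * ((σ₀ x)⁻¹ * η₀ x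
              - (ω ^ 2)⁻¹ * ((Real.sqrt (σ₀ x))⁻¹
                  * lapR (fun y => Real.sqrt (σ₀ y)) x)) : ℝ) : ℂ)
          * (((Real.sqrt (σ₀ x) : ℝ) : ℂ) * u x) = 0 := by
  intro x hx
  set s := fun y => Real.sqrt (σ₀ y)
  have hσ_sq : ∀ y ∈ O, σ₀ y = s y ^ 2 := fun y hy => (Real.sq_sqrt (hσ₀pos y hy).le).symm
  have hs : ContDiffAt ℝ 2 s x :=
    (Real.contDiffAt_sqrt (hσ₀pos x hx).ne').comp x (hσ₀.contDiffAt (hO.mem_nhds hx))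
  have hdiv : ∑ i : Fin n, pdC i (fun y => ((s y ^ 2 : ℝ) : ℂ) * pdC i u y) x
      = -((ω ^ 2 * η₀ x : ℝ) : ℂ) * u x := by
    rw [neg_mul, eq_neg_iff_add_eq_zero, ← huEq x hx]
    congr 1
    refine Finset.sum_congr rfl fun i _ => pdC_congr_of_eventuallyEq i ?_
    filter_upwards [hO.mem_nhds hx] with y hy
    rw [hσ_sq y hy]
  have hgauge := ofReal_mul_lapC_ofReal_mul hs (hu.contDiffAt (hO.mem_nhds hx))
  rw [hdiv] at hgauge
  have hsx : (s x : ℂ) ≠ 0 := Complex.ofReal_ne_zero.2 (Real.sqrt_pos.2 (hσ₀pos x hx)).ne'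
  have hω' : (ω : ℂ) ≠ 0 := Complex.ofReal_ne_zero.2 hω.ne'
  change lapC (fun y => (s y : ℂ) * u y) x
    + ((ω ^ 2 * ((σ₀ x)⁻¹ * η₀ x - (ω ^ 2)⁻¹ * ((s x)⁻¹ * lapR s x)) : ℝ) : ℂ)
      * ((s x : ℂ) * u x) = 0
  rw [hσ_sq x hx]
  push_cast at hgauge ⊢
  field_simp
  linear_combination hgauge

/-- If `u` solves the heterogeneous Helmholtz equation `∑ᵢ ∂ᵢ(σ₀ ∂ᵢ u) + ω² η₀ u = 0`
on an open set `O`, then `v = σ₀^{1/2} u` solves `Δv + ω² q v = 0` on `O`, where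
`q = σ₀⁻¹ η₀ − ω⁻² γ₀` and `γ₀ = σ₀^{-1/2} Δ(σ₀^{1/2})`. -/
theorem gauge_transformed_helmholtz
    {n : ℕ} (O : Set (EuclideanSpace ℝ (Fin n))) (hO : IsOpen O)
    (σ₀ η₀ : EuclideanSpace ℝ (Fin n) → ℝ) (u : EuclideanSpace ℝ (Fin n) → ℂ)
    (hσ₀ : ContDiffOn ℝ 2 σ₀ O) (hσ₀pos : ∀ x ∈ O, 0 < σ₀ x)
    (hη₀ : ContinuousOn η₀ O) (ω : ℝ) (hω : 0 < ω)
    (hu : ContDiffOn ℝ 2 u O)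
    (huEq : ∀ x ∈ O,
      (∑ i : Fin n, pdC i (fun y => ((σ₀ y : ℝ) : ℂ) * pdC i u y) x)
        + ((ω ^ 2 * η₀ x : ℝ) : ℂ) * u x = 0) :
    ∀ x ∈ O,
      lapC (fun y => ((Real.sqrt (σ₀ y) : ℝ) : ℂ) * u y) x
        + ((ω ^ 2 * ((σ₀ x)⁻¹ * η₀ x
              - (ω ^ 2)⁻¹ * ((Real.sqrt (σ₀ x))⁻¹
                  * lapR (fun y => Real.sqrt (σ₀ y)) x)) : ℝ) : ℂ)
          * (((Real.sqrt (σ₀ x) : ℝ) : ℂ) * u x) = 0 :=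
  gauge_transformed_helmholtz_general O hO σ₀ η₀ u hσ₀ hσ₀pos ω hω hu huEq
end

section
/- Let Ω, Ω̃ ⊆ ℝⁿ be open sets and F : Ω → Ω̃ a bijective, continuously differentiable map with continuously differentiable inverse, whose Jacobian matrix M(x) = DF(x) has J(x) = det M(x) > 0 for all x ∈ Ω. Let σ : Ω → (n×n real matrices) and η : Ω → ℝ be continuous, let u : Ω → ℂ be continuously differentiable, and let ω ∈ ℝ. Define the push-forwards on Ω̃ by ũ(F(x)) = u(x), σ̃(F(x)) = J(x)^{-1} M(x) σ(x) M(x)ᵀ, and η̃(F(x)) = η(x)/J(x). Then for every continuously differentiable φ : Ω̃ → ℂ with compact support contained in Ω̃, ∫_{Ω̃} [ ∑_{i,j=1}^n σ̃^{ij}(x̃) ∂_j ũ(x̃) ∂_i φ(x̃) − ω² η̃(x̃) ũ(x̃) φ(x̃) ] dx̃ = ∫_{Ω} [ ∑_{i,j=1}^n σ^{ij}(x) ∂_j u(x) ∂_i(φ∘F)(x) − ω² η(x) u(x) φ(F(x)) ] dx. -/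
open scoped BigOperators
open MeasureTheory Matrix

open Filter Topology

section
variable {ι : Type*} [Fintype ι]

theorem Matrix.sum_sum_mul_mul_eq_dotProduct_mulVec {R : Type*} [CommSemiring R]
    (A : Matrix ι ι R) (a b : ι → R) :
    ∑ i, ∑ j, A i j * a j * b i = b ⬝ᵥ (A *ᵥ a) := by
  simp only [dotProduct, mulVec, Finset.mul_sum]
  exact Finset.sum_congr rfl fun i _ => Finset.sum_congr rfl fun j _ => by ring

theorem Matrix.sum_sum_map_mul_mul_transpose {R S : Type*} [CommSemiring R] [CommSemiring S]
    (f : R →+* S) (m s : Matrix ι ι R) (a b : ι → S) :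
    ∑ i, ∑ j, f ((m * s * mᵀ) i j) * a j * b i
      = ∑ i, ∑ j, f (s i j) * (∑ k, f (m k j) * a k) * (∑ l, f (m l i) * b l) := by
  have hmT (v : ι → S) : (fun j => ∑ k, m.map f k j * v k) = (m.map f)ᵀ *ᵥ v := rfl
  simp only [← map_apply (f := f), sum_sum_mul_mul_eq_dotProduct_mulVec, hmT, Matrix.map_mul,
    transpose_map, ← mulVec_mulVec, dotProduct_mulVec b, ← mulVec_transpose]

variable [DecidableEq ι]

theorem ContinuousLinearMap.apply_eq_sum_single {E : Type*} [AddCommGroup E] [Module ℝ E]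
    [TopologicalSpace E] (L : EuclideanSpace ℝ ι →L[ℝ] E) (v : EuclideanSpace ℝ ι) :
    L v = ∑ i, v i • L (EuclideanSpace.single i 1) := by
  conv_lhs => rw [← (EuclideanSpace.basisFun ι ℝ).sum_repr v]
  simp [map_sum, map_smul]

theorem ContinuousLinearMap.det_eq_det_of_apply_single
    (L : EuclideanSpace ℝ ι →L[ℝ] EuclideanSpace ℝ ι) (A : Matrix ι ι ℝ)
    (hA : ∀ i j, A i j = L (EuclideanSpace.single j 1) i) :
    L.det = A.det := by
  rw [ContinuousLinearMap.det, ← LinearMap.det_toMatrix (EuclideanSpace.basisFun ι ℝ).toBasis]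
  congr 1
  ext i j
  simp [LinearMap.toMatrix_apply, hA]

end

section
variable {n : ℕ}

theorem Filter.EventuallyEq.pdC_eq {f g : EuclideanSpace ℝ (Fin n) → ℂ}
    {x : EuclideanSpace ℝ (Fin n)} (h : f =ᶠ[𝓝 x] g) (i : Fin n) :
    pdC i f x = pdC i g x := by
  rw [pdC, pdC, h.fderiv_eq]

theorem pdC_comp {f : EuclideanSpace ℝ (Fin n) → ℂ}
    {F : EuclideanSpace ℝ (Fin n) → EuclideanSpace ℝ (Fin n)} {x : EuclideanSpace ℝ (Fin n)}
    (hf : DifferentiableAt ℝ f (F x)) (hF : DifferentiableAt ℝ F x) (j : Fin n) :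
    pdC j (f ∘ F) x
      = ∑ k, ((fderiv ℝ F x (EuclideanSpace.single j 1) k : ℝ) : ℂ) * pdC k f (F x) := by
  rw [pdC, fderiv_comp x hf hF, ContinuousLinearMap.comp_apply,
    ContinuousLinearMap.apply_eq_sum_single]
  simp only [Complex.real_smul, pdC]

noncomputable def helmholtzDensity (ω : ℝ)
    (σ : EuclideanSpace ℝ (Fin n) → Matrix (Fin n) (Fin n) ℝ) (η : EuclideanSpace ℝ (Fin n) → ℝ)
    (u φ : EuclideanSpace ℝ (Fin n) → ℂ) (x : EuclideanSpace ℝ (Fin n)) : ℂ :=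
  (∑ i, ∑ j, ((σ x i j : ℝ) : ℂ) * pdC j u x * pdC i φ x)
    - ((ω ^ 2 * η x : ℝ) : ℂ) * u x * φ x

theorem abs_det_smul_helmholtzDensity_pushforward {ω : ℝ}
    {σ σ' : EuclideanSpace ℝ (Fin n) → Matrix (Fin n) (Fin n) ℝ}
    {η η' : EuclideanSpace ℝ (Fin n) → ℝ} {u u' φ : EuclideanSpace ℝ (Fin n) → ℂ}
    {F : EuclideanSpace ℝ (Fin n) → EuclideanSpace ℝ (Fin n)} {x : EuclideanSpace ℝ (Fin n)}
    {M : Matrix (Fin n) (Fin n) ℝ} (hF : DifferentiableAt ℝ F x)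
    (hM : ∀ i j, M i j = fderiv ℝ F x (EuclideanSpace.single j 1) i) (hJ : 0 < M.det)
    (hu' : DifferentiableAt ℝ u' (F x)) (hφ : DifferentiableAt ℝ φ (F x))
    (hu : u =ᶠ[𝓝 x] u' ∘ F)
    (hσ' : σ' (F x) = M.det⁻¹ • (M * σ x * Mᵀ)) (hη' : η' (F x) = η x / M.det) :
    |(fderiv ℝ F x).det| • helmholtzDensity ω σ' η' u' φ (F x)
      = helmholtzDensity ω σ η u (φ ∘ F) x := by
  have hgrad_u (j : Fin n) : pdC j u x = ∑ k, ((M k j : ℝ) : ℂ) * pdC k u' (F x) := by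
    simp only [hu.pdC_eq, pdC_comp hu' hF, hM]
  have hgrad_φ (i : Fin n) :
      pdC i (φ ∘ F) x = ∑ l, ((M l i : ℝ) : ℂ) * pdC l φ (F x) := by
    simp only [pdC_comp hφ hF, hM]
  have hform := sum_sum_map_mul_mul_transpose Complex.ofRealHom M (σ x)
    (fun k => pdC k u' (F x)) (fun l => pdC l φ (F x))
  simp only [Complex.ofRealHom_eq_coe] at hform
  rw [ContinuousLinearMap.det_eq_det_of_apply_single _ M hM, abs_of_pos hJ, Complex.real_smul]
  simp only [helmholtzDensity, hσ', hη', hu.eq_of_nhds, hgrad_u, hgrad_φ, ← hform,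
    Matrix.smul_apply, smul_eq_mul, Function.comp_apply]
  have hJ0 : (M.det : ℂ) ≠ 0 := Complex.ofReal_ne_zero.mpr hJ.ne'
  push_cast
  simp only [Finset.mul_sum, mul_sub]
  field_simp

end

theorem Set.SurjOn.eqOn_comp_of_leftInvOn {α β γ : Type*} {s : Set α} {t : Set β}
    {f : α → β} {g : β → α} {u : α → γ} {v : β → γ} (hf : Set.SurjOn f s t)
    (hg : Set.LeftInvOn g f s)
    (hv : Set.EqOn (v ∘ f) u s) : Set.EqOn v (u ∘ g) t := by
  rintro _ hy
  obtain ⟨x, hx, rfl⟩ := hf hy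
  simp [hg hx, ← hv hx]

theorem helmholtz_transformation_invariance_general
    {n : ℕ} (Ω Ω' : Set (EuclideanSpace ℝ (Fin n))) (hΩ : IsOpen Ω) (hΩ' : IsOpen Ω')
    (F G : EuclideanSpace ℝ (Fin n) → EuclideanSpace ℝ (Fin n))
    (hFbij : Set.BijOn F Ω Ω')
    (hFdiff : ContDiffOn ℝ 1 F Ω) (hGdiff : ContDiffOn ℝ 1 G Ω')
    (hGF : ∀ x ∈ Ω, G (F x) = x)
    (M : EuclideanSpace ℝ (Fin n) → Matrix (Fin n) (Fin n) ℝ)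
    (hM : ∀ x ∈ Ω, ∀ i j, M x i j = fderiv ℝ F x (EuclideanSpace.single j 1) i)
    (hJ : ∀ x ∈ Ω, 0 < (M x).det)
    (σ : EuclideanSpace ℝ (Fin n) → Matrix (Fin n) (Fin n) ℝ)
    (η : EuclideanSpace ℝ (Fin n) → ℝ)
    (u : EuclideanSpace ℝ (Fin n) → ℂ) (hu : ContDiffOn ℝ 1 u Ω) (ω : ℝ)
    (u' : EuclideanSpace ℝ (Fin n) → ℂ)
    (σ' : EuclideanSpace ℝ (Fin n) → Matrix (Fin n) (Fin n) ℝ)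
    (η' : EuclideanSpace ℝ (Fin n) → ℝ)
    (hu' : ∀ x ∈ Ω, u' (F x) = u x)
    (hσ' : ∀ x ∈ Ω, σ' (F x) = ((M x).det)⁻¹ • (M x * σ x * (M x)ᵀ))
    (hη' : ∀ x ∈ Ω, η' (F x) = η x / (M x).det)
    (φ : EuclideanSpace ℝ (Fin n) → ℂ)
    (hφ : ContDiff ℝ 1 φ) :
    (∫ y in Ω', (∑ i : Fin n, ∑ j : Fin n,
          ((σ' y i j : ℝ) : ℂ) * pdC j u' y * pdC i φ y)
        - ((ω ^ 2 * η' y : ℝ) : ℂ) * u' y * φ y)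
      = ∫ x in Ω, (∑ i : Fin n, ∑ j : Fin n,
          ((σ x i j : ℝ) : ℂ) * pdC j u x * pdC i (fun z => φ (F z)) x)
        - ((ω ^ 2 * η x : ℝ) : ℂ) * u x * φ (F x) := by
  have hFd (x) (hx : x ∈ Ω) : DifferentiableAt ℝ F x :=
    (hFdiff.contDiffAt (hΩ.mem_nhds hx)).differentiableAt one_ne_zero
  change ∫ y in Ω', helmholtzDensity ω σ' η' u' φ y
    = ∫ x in Ω, helmholtzDensity ω σ η u (φ ∘ F) x
  rw [← hFbij.image_eq, integral_image_eq_integral_abs_det_fderiv_smul volume hΩ.measurableSet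
    (fun x hx => (hFd x hx).hasFDerivAt.hasFDerivWithinAt) hFbij.injOn]
  refine setIntegral_congr_fun hΩ.measurableSet fun x hx => ?_
  have hFx : F x ∈ Ω' := hFbij.mapsTo hx
  have hu'G : u' =ᶠ[𝓝 (F x)] u ∘ G :=
    (hFbij.surjOn.eqOn_comp_of_leftInvOn hGF hu').eventuallyEq_of_mem (hΩ'.mem_nhds hFx)
  have huG : DifferentiableAt ℝ (u ∘ G) (F x) := by
    refine DifferentiableAt.comp _ ?_
      ((hGdiff.contDiffAt (hΩ'.mem_nhds hFx)).differentiableAt one_ne_zero)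
    rw [hGF x hx]
    exact (hu.contDiffAt (hΩ.mem_nhds hx)).differentiableAt one_ne_zero
  exact abs_det_smul_helmholtzDensity_pushforward (hFd x hx) (hM x hx) (hJ x hx)
    (huG.congr_of_eventuallyEq hu'G) (hφ.differentiable one_ne_zero _)
    (eventuallyEq_of_mem (hΩ.mem_nhds hx) fun z hz => (hu' z hz).symm) (hσ' x hx) (hη' x hx)

/-- Weak-form transformation invariance of the heterogeneous Helmholtz equation:
for a `C¹` diffeomorphism `F : Ω → Ω̃` with positive Jacobian determinant, the
push-forwarded fields `ũ = u∘F⁻¹`, `σ̃ = J⁻¹ M σ Mᵀ`, `η̃ = η/J` satisfy, for every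
`C¹` test function `φ` compactly supported in `Ω̃`,
`∫_{Ω̃} [∑ σ̃ij ∂jũ ∂iφ − ω²η̃ũφ] = ∫_Ω [∑ σij ∂ju ∂i(φ∘F) − ω²ηu (φ∘F)]`. -/
theorem helmholtz_transformation_invariance
    {n : ℕ} (Ω Ω' : Set (EuclideanSpace ℝ (Fin n))) (hΩ : IsOpen Ω) (hΩ' : IsOpen Ω')
    (F G : EuclideanSpace ℝ (Fin n) → EuclideanSpace ℝ (Fin n))
    (hFbij : Set.BijOn F Ω Ω')
    (hFdiff : ContDiffOn ℝ 1 F Ω) (hGdiff : ContDiffOn ℝ 1 G Ω')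
    (hGF : ∀ x ∈ Ω, G (F x) = x) (hFG : ∀ y ∈ Ω', F (G y) = y)
    (M : EuclideanSpace ℝ (Fin n) → Matrix (Fin n) (Fin n) ℝ)
    (hM : ∀ x ∈ Ω, ∀ i j, M x i j = fderiv ℝ F x (EuclideanSpace.single j 1) i)
    (hJ : ∀ x ∈ Ω, 0 < (M x).det)
    (σ : EuclideanSpace ℝ (Fin n) → Matrix (Fin n) (Fin n) ℝ)
    (η : EuclideanSpace ℝ (Fin n) → ℝ)
    (hσ : ContinuousOn σ Ω) (hη : ContinuousOn η Ω)
    (u : EuclideanSpace ℝ (Fin n) → ℂ) (hu : ContDiffOn ℝ 1 u Ω) (ω : ℝ)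
    (u' : EuclideanSpace ℝ (Fin n) → ℂ)
    (σ' : EuclideanSpace ℝ (Fin n) → Matrix (Fin n) (Fin n) ℝ)
    (η' : EuclideanSpace ℝ (Fin n) → ℝ)
    (hu' : ∀ x ∈ Ω, u' (F x) = u x)
    (hσ' : ∀ x ∈ Ω, σ' (F x) = ((M x).det)⁻¹ • (M x * σ x * (M x)ᵀ))
    (hη' : ∀ x ∈ Ω, η' (F x) = η x / (M x).det)
    (φ : EuclideanSpace ℝ (Fin n) → ℂ)
    (hφ : ContDiff ℝ 1 φ) (hφsupp : HasCompactSupport φ)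
    (hφsub : tsupport φ ⊆ Ω') :
    (∫ y in Ω', (∑ i : Fin n, ∑ j : Fin n,
          ((σ' y i j : ℝ) : ℂ) * pdC j u' y * pdC i φ y)
        - ((ω ^ 2 * η' y : ℝ) : ℂ) * u' y * φ y)
      = ∫ x in Ω, (∑ i : Fin n, ∑ j : Fin n,
          ((σ x i j : ℝ) : ℂ) * pdC j u x * pdC i (fun z => φ (F z)) x)
        - ((ω ^ 2 * η x : ℝ) : ℂ) * u x * φ (F x) :=
  helmholtz_transformation_invariance_general Ω Ω' hΩ hΩ' F G hFbij hFdiff hGdiff hGF M hM hJ σ η u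
    hu ω u' σ' η' hu' hσ' hη' φ hφ
end

section
/- Let 0 < ρ < r₁ < r₂ and set a = (r₁ − ρ)r₂/(r₂ − ρ), b = (r₂ − r₁)/(r₂ − ρ), and 𝓕(x) = (a + b‖x‖) x/‖x‖ for x ≠ 0. Then 𝓕 is bi-Lipschitz on the closed annulus A = {x ∈ ℝⁿ : ρ ≤ ‖x‖ ≤ r₂}: there exist constants 0 < c ≤ C < ∞ such that c‖x − y‖ ≤ ‖𝓕(x) − 𝓕(y)‖ ≤ C‖x − y‖ for all x, y ∈ A. -/
/-!
Write `x = s u` with `‖u‖ = 1`. For unit vectors `u, v` one has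
`‖p u - q v‖² = (p - q)² + p q ‖u - v‖²`, which splits a distance into a radial and an angular
part. A radial map `s u ↦ φ(s) u` multiplies the radial part by the squared slope of `φ` and the
angular part by `φ(s) φ(t) / (s t)`; for `φ(s) = a + b s` on `[ρ, r₂]` the slope is `b` and
`φ(s) / s` lies in `[b, r₁ / ρ]`, so both factors lie in `[b², (r₁ / ρ)²]`.
-/

section RadialExtension

variable {E : Type*} [NormedAddCommGroup E] [InnerProductSpace ℝ E]

theorem norm_smul_sub_smul_sq_of_norm_eq_one {u v : E} (hu : ‖u‖ = 1) (hv : ‖v‖ = 1) (p q : ℝ) :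
    ‖p • u - q • v‖ ^ 2 = (p - q) ^ 2 + p * q * ‖u - v‖ ^ 2 := by
  rw [norm_sub_sq_real, norm_sub_sq_real, norm_smul, norm_smul, real_inner_smul_left,
    real_inner_smul_right, hu, hv, Real.norm_eq_abs, Real.norm_eq_abs, mul_pow, mul_pow, sq_abs,
    sq_abs]
  ring

noncomputable def radialExtension (φ : ℝ → ℝ) (x : E) : E := φ ‖x‖ • (‖x‖⁻¹ • x)

theorem norm_radialExtension_sub_sq (φ : ℝ → ℝ) {x y : E} (hx : x ≠ 0) (hy : y ≠ 0) :
    ‖radialExtension φ x - radialExtension φ y‖ ^ 2 =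
      (φ ‖x‖ - φ ‖y‖) ^ 2 + φ ‖x‖ * φ ‖y‖ * ‖‖x‖⁻¹ • x - ‖y‖⁻¹ • y‖ ^ 2 :=
  norm_smul_sub_smul_sq_of_norm_eq_one (norm_smul_inv_norm hx) (norm_smul_inv_norm hy) _ _

theorem radialExtension_id {x : E} (hx : x ≠ 0) : radialExtension id x = x := by
  rw [radialExtension, id, smul_smul, mul_inv_cancel₀ (norm_ne_zero_iff.2 hx), one_smul]

theorem norm_sub_sq_eq_radial_add_angular {x y : E} (hx : x ≠ 0) (hy : y ≠ 0) :
    ‖x - y‖ ^ 2 = (‖x‖ - ‖y‖) ^ 2 + ‖x‖ * ‖y‖ * ‖‖x‖⁻¹ • x - ‖y‖⁻¹ • y‖ ^ 2 := by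
  simpa only [radialExtension_id hx, radialExtension_id hy, id] using
    norm_radialExtension_sub_sq id hx hy

theorem mul_norm_sub_le_norm_radialExtension_sub {φ : ℝ → ℝ} {c : ℝ} {x y : E}
    (hx : x ≠ 0) (hy : y ≠ 0) (hc : 0 ≤ c)
    (hφ : c * |‖x‖ - ‖y‖| ≤ |φ ‖x‖ - φ ‖y‖|) (hφx : c * ‖x‖ ≤ φ ‖x‖) (hφy : c * ‖y‖ ≤ φ ‖y‖) :
    c * ‖x - y‖ ≤ ‖radialExtension φ x - radialExtension φ y‖ := by
  have radial : c ^ 2 * (‖x‖ - ‖y‖) ^ 2 ≤ (φ ‖x‖ - φ ‖y‖) ^ 2 := by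
    simpa only [mul_pow, sq_abs] using pow_le_pow_left₀ (by positivity) hφ 2
  have angular : c ^ 2 * (‖x‖ * ‖y‖) ≤ φ ‖x‖ * φ ‖y‖ := by
    simpa only [mul_mul_mul_comm, ← sq] using
      mul_le_mul hφx hφy (by positivity) ((mul_nonneg hc (norm_nonneg x)).trans hφx)
  rw [← pow_le_pow_iff_left₀ (by positivity) (norm_nonneg _) two_ne_zero, mul_pow,
    norm_sub_sq_eq_radial_add_angular hx hy, norm_radialExtension_sub_sq φ hx hy]
  nlinarith [sq_nonneg ‖‖x‖⁻¹ • x - ‖y‖⁻¹ • y‖]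

theorem norm_radialExtension_sub_le_mul_norm_sub {φ : ℝ → ℝ} {C : ℝ} {x y : E}
    (hx : x ≠ 0) (hy : y ≠ 0)
    (hφ : |φ ‖x‖ - φ ‖y‖| ≤ C * |‖x‖ - ‖y‖|) (hφx₀ : 0 ≤ φ ‖x‖) (hφx : φ ‖x‖ ≤ C * ‖x‖)
    (hφy₀ : 0 ≤ φ ‖y‖) (hφy : φ ‖y‖ ≤ C * ‖y‖) :
    ‖radialExtension φ x - radialExtension φ y‖ ≤ C * ‖x - y‖ := by
  have hC : 0 ≤ C := nonneg_of_mul_nonneg_left (hφx₀.trans hφx) (norm_pos_iff.2 hx)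
  have radial : (φ ‖x‖ - φ ‖y‖) ^ 2 ≤ C ^ 2 * (‖x‖ - ‖y‖) ^ 2 := by
    simpa only [mul_pow, sq_abs] using pow_le_pow_left₀ (abs_nonneg _) hφ 2
  have angular : φ ‖x‖ * φ ‖y‖ ≤ C ^ 2 * (‖x‖ * ‖y‖) := by
    simpa only [mul_mul_mul_comm, ← sq] using mul_le_mul hφx hφy hφy₀ (by positivity)
  rw [← pow_le_pow_iff_left₀ (norm_nonneg _) (by positivity) two_ne_zero, mul_pow,
    norm_sub_sq_eq_radial_add_angular hx hy, norm_radialExtension_sub_sq φ hx hy]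
  nlinarith [sq_nonneg ‖‖x‖⁻¹ • x - ‖y‖⁻¹ • y‖]

end RadialExtension

theorem add_mul_le_div_mul_of_le {a b ρ s : ℝ} (ha : 0 ≤ a) (hρ : 0 < ρ) (hs : ρ ≤ s) :
    a + b * s ≤ (a + b * ρ) / ρ * s := by
  rw [div_mul_eq_mul_div, le_div_iff₀ hρ]
  nlinarith

/-- The blow-up map `𝓕(x) = (a + b‖x‖) x/‖x‖` is bi-Lipschitz on the closed annulus
`A = {x : ρ ≤ ‖x‖ ≤ r₂}`: there exist `0 < c ≤ C` with
`c‖x − y‖ ≤ ‖𝓕(x) − 𝓕(y)‖ ≤ C‖x − y‖` for all `x, y ∈ A`. -/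
theorem blowup_map_biLipschitz {n : ℕ} (ρ r₁ r₂ : ℝ) (hρ : 0 < ρ) (h₁ : ρ < r₁)
    (h₂ : r₁ < r₂)
    (a b : ℝ) (ha : a = (r₁ - ρ) * r₂ / (r₂ - ρ)) (hb : b = (r₂ - r₁) / (r₂ - ρ))
    (F : EuclideanSpace ℝ (Fin n) → EuclideanSpace ℝ (Fin n))
    (hF : ∀ x, x ≠ 0 → F x = (a + b * ‖x‖) • (‖x‖⁻¹ • x)) :
    ∃ c C : ℝ, 0 < c ∧ c ≤ C ∧
      ∀ x ∈ {x : EuclideanSpace ℝ (Fin n) | ρ ≤ ‖x‖ ∧ ‖x‖ ≤ r₂},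
        ∀ y ∈ {x : EuclideanSpace ℝ (Fin n) | ρ ≤ ‖x‖ ∧ ‖x‖ ≤ r₂},
          c * ‖x - y‖ ≤ ‖F x - F y‖ ∧ ‖F x - F y‖ ≤ C * ‖x - y‖ := by
  have hr : 0 < r₂ - ρ := by linarith
  have hb₀ : 0 < b := hb ▸ div_pos (by linarith) hr
  have ha₀ : 0 ≤ a := ha ▸ div_nonneg (mul_nonneg (by linarith) (by linarith)) hr.le
  have hφρ : a + b * ρ = r₁ := by rw [ha, hb]; field_simp; ring
  have hbC : b ≤ r₁ / ρ := by
    rw [hb, div_le_div_iff₀ hr hρ]; nlinarith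
  refine ⟨b, r₁ / ρ, hb₀, hbC, ?_⟩
  rintro x ⟨hxρ, -⟩ y ⟨hyρ, -⟩
  have hx : x ≠ 0 := norm_pos_iff.1 (hρ.trans_le hxρ)
  have hy : y ≠ 0 := norm_pos_iff.1 (hρ.trans_le hyρ)
  have slope : |(a + b * ‖x‖) - (a + b * ‖y‖)| = b * |‖x‖ - ‖y‖| := by
    rw [add_sub_add_left_eq_sub, ← mul_sub, abs_mul, abs_of_pos hb₀]
  have lower (s : ℝ) : b * s ≤ a + b * s := le_add_of_nonneg_left ha₀
  have upper {s : ℝ} (hs : ρ ≤ s) : a + b * s ≤ r₁ / ρ * s :=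
    hφρ ▸ add_mul_le_div_mul_of_le ha₀ hρ hs
  have nonneg (z : EuclideanSpace ℝ (Fin n)) : 0 ≤ a + b * ‖z‖ :=
    add_nonneg ha₀ (mul_nonneg hb₀.le (norm_nonneg z))
  rw [hF x hx, hF y hy]
  constructor
  · exact mul_norm_sub_le_norm_radialExtension_sub (φ := fun s ↦ a + b * s) hx hy hb₀.le
      slope.ge (lower _) (lower _)
  · exact norm_radialExtension_sub_le_mul_norm_sub (φ := fun s ↦ a + b * s) hx hy
      (slope.trans_le (by gcongr)) (nonneg x) (upper hxρ) (nonneg y) (upper hyρ)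
end

section
/- Let ω > 0 and ρ > 0. For all x, y ∈ ℝ³ with y ≠ x and every ν ∈ ℝ³ with ‖ν‖ ≤ 1, the directional derivative in y of the rescaled Helmholtz kernel differs from that of the Laplace kernel by at most ω²ρ²/(8π): | D_y( y ↦ e^{iωρ‖x−y‖}/(4π‖x−y‖) )[ν] − D_y( y ↦ 1/(4π‖x−y‖) )[ν] | ≤ ω²ρ²/(8π), where D_y(·)[ν] denotes the Fréchet derivative at y applied to the direction ν. -/
/-! With `r = ‖x - z‖` and `k = ωρ`, both kernels are radial profiles composed with `r`, and `r` is
1-Lipschitz, so it suffices to bound the difference of the derivatives of the profiles. That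
difference is `(i k r e^{ikr} - e^{ikr} + 1) / (4π r²)`; the numerator equals
`∫₀^{kr} -u e^{iu} du`, of modulus at most `(kr)²/2`, and the factor `r²` cancels. -/

open Complex
open scoped Real

theorem norm_I_mul_mul_exp_sub_exp_add_one_le_of_nonneg {s : ℝ} (hs : 0 ≤ s) :
    ‖I * s * exp (I * s) - exp (I * s) + 1‖ ≤ s ^ 2 / 2 := by
  have hderiv : ∀ u : ℝ, HasDerivAt (fun v : ℝ => I * v * exp (I * v) - exp (I * v) + 1)
      (-(u : ℂ) * exp (I * u)) u := by
    intro u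
    have hlin : HasDerivAt (fun v : ℝ => I * v) I u := by
      simpa using (hasDerivAt_id u).ofReal_comp.const_mul I
    refine (((hlin.fun_mul hlin.cexp).fun_sub hlin.cexp).add_const 1).congr_deriv ?_
    linear_combination (u * exp (I * u)) * I_sq
  have hftc :
      I * s * exp (I * s) - exp (I * s) + 1 = ∫ u in (0 : ℝ)..s, -(u : ℂ) * exp (I * u) := by
    rw [intervalIntegral.integral_eq_sub_of_hasDerivAt (fun u _ => hderiv u)
      ((by fun_prop : Continuous fun u : ℝ => -(u : ℂ) * exp (I * u)).intervalIntegrable _ _)]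
    simp
  calc ‖I * s * exp (I * s) - exp (I * s) + 1‖
      ≤ ∫ u in (0 : ℝ)..s, ‖-(u : ℂ) * exp (I * u)‖ :=
        hftc ▸ intervalIntegral.norm_integral_le_integral_norm hs
    _ = ∫ u in (0 : ℝ)..s, u := by
        refine intervalIntegral.integral_congr fun u hu => ?_
        rw [Set.uIcc_of_le hs] at hu
        simp [norm_exp, abs_of_nonneg hu.1]
    _ = s ^ 2 / 2 := by simp [integral_id]

theorem norm_I_mul_mul_exp_sub_exp_add_one_le (s : ℝ) :
    ‖I * s * exp (I * s) - exp (I * s) + 1‖ ≤ s ^ 2 / 2 := by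
  rcases le_total 0 s with hs | hs
  · exact norm_I_mul_mul_exp_sub_exp_add_one_le_of_nonneg hs
  · have hconj : I * ((-s : ℝ) : ℂ) * exp (I * ((-s : ℝ) : ℂ)) - exp (I * ((-s : ℝ) : ℂ)) + 1
        = starRingEnd ℂ (I * s * exp (I * s) - exp (I * s) + 1) := by
      simp [← exp_conj]
    have h := norm_I_mul_mul_exp_sub_exp_add_one_le_of_nonneg (neg_nonneg.2 hs)
    rwa [hconj, norm_conj, neg_sq] at h

theorem hasDerivAt_helmholtz_profile (k : ℝ) {t : ℝ} (ht : t ≠ 0) :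
    HasDerivAt (fun s : ℝ => exp (I * ((k * s : ℝ) : ℂ)) / ((4 * π * s : ℝ) : ℂ))
      ((I * ((k * t : ℝ) : ℂ) - 1) * exp (I * ((k * t : ℝ) : ℂ)) / ((4 * π * t ^ 2 : ℝ) : ℂ))
      t := by
  have hphase : HasDerivAt (fun s : ℝ => I * ((k * s : ℝ) : ℂ)) (I * k) t := by
    simpa using ((hasDerivAt_id t).const_mul k).ofReal_comp.const_mul I
  have hden : HasDerivAt (fun s : ℝ => ((4 * π * s : ℝ) : ℂ)) ((4 * π : ℝ) : ℂ) t := by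
    simpa using ((hasDerivAt_id t).const_mul (4 * π)).ofReal_comp
  refine (hphase.cexp.fun_div hden (by simp [ht, Real.pi_ne_zero])).congr_deriv ?_
  push_cast
  field_simp

theorem hasDerivAt_laplace_profile {t : ℝ} (ht : t ≠ 0) :
    HasDerivAt (fun s : ℝ => ((4 * π * s : ℝ) : ℂ)⁻¹) (-1 / ((4 * π * t ^ 2 : ℝ) : ℂ)) t := by
  have hden : HasDerivAt (fun s : ℝ => ((4 * π * s : ℝ) : ℂ)) ((4 * π : ℝ) : ℂ) t := by
    simpa using ((hasDerivAt_id t).const_mul (4 * π)).ofReal_comp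
  refine (hden.fun_inv (by simp [ht, Real.pi_ne_zero])).congr_deriv ?_
  push_cast
  field_simp

theorem norm_helmholtz_deriv_sub_laplace_deriv_le (k : ℝ) {t : ℝ} (ht : t ≠ 0) :
    ‖(I * ((k * t : ℝ) : ℂ) - 1) * exp (I * ((k * t : ℝ) : ℂ)) / ((4 * π * t ^ 2 : ℝ) : ℂ)
      - -1 / ((4 * π * t ^ 2 : ℝ) : ℂ)‖ ≤ k ^ 2 / (8 * π) := by
  have hden : 0 < 4 * π * t ^ 2 := by positivity
  have hsplit :
      (I * ((k * t : ℝ) : ℂ) - 1) * exp (I * ((k * t : ℝ) : ℂ)) / ((4 * π * t ^ 2 : ℝ) : ℂ)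
      - -1 / ((4 * π * t ^ 2 : ℝ) : ℂ)
      = (I * ((k * t : ℝ) : ℂ) * exp (I * ((k * t : ℝ) : ℂ)) - exp (I * ((k * t : ℝ) : ℂ)) + 1)
        / ((4 * π * t ^ 2 : ℝ) : ℂ) := by ring
  rw [hsplit, norm_div, norm_real, Real.norm_of_nonneg hden.le, div_le_iff₀ hden]
  calc _ ≤ (k * t) ^ 2 / 2 := norm_I_mul_mul_exp_sub_exp_add_one_le (k * t)
    _ = k ^ 2 / (8 * π) * (4 * π * t ^ 2) := by field_simp; ring

section

variable {E F : Type*} [NormedAddCommGroup E] [NormedAddCommGroup F] [NormedSpace ℝ F]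

theorem norm_fderiv_norm_sub_apply_le [NormedSpace ℝ E] (x y ν : E) :
    ‖fderiv ℝ (fun z => ‖x - z‖) y ν‖ ≤ ‖ν‖ := by
  have hlip : LipschitzWith 1 fun z : E => ‖x - z‖ := by
    rw [← funext (dist_eq_norm x)]
    exact LipschitzWith.dist_right x
  simpa using (fderiv ℝ (fun z => ‖x - z‖) y).le_of_opNorm_le (norm_fderiv_le_of_lipschitz ℝ hlip) ν

theorem fderiv_comp_norm_sub_apply [InnerProductSpace ℝ E] {φ : ℝ → F} {φ' : F} {x y : E}
    (hxy : y ≠ x) (hφ : HasDerivAt φ φ' ‖x - y‖) (ν : E) :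
    fderiv ℝ (fun z => φ ‖x - z‖) y ν = fderiv ℝ (fun z => ‖x - z‖) y ν • φ' := by
  have hr : DifferentiableAt ℝ (fun z => ‖x - z‖) y :=
    ((differentiableAt_const x).sub differentiableAt_id).norm ℝ (sub_ne_zero.2 hxy.symm)
  show fderiv ℝ (φ ∘ fun z => ‖x - z‖) y ν = _
  rw [(hφ.hasFDerivAt.comp y hr.hasFDerivAt).fderiv]
  simp

end

theorem kernel_gradient_comparison_general (ω ρ : ℝ)
    (x y : EuclideanSpace ℝ (Fin 3)) (hxy : y ≠ x)
    (ν : EuclideanSpace ℝ (Fin 3)) (hν : ‖ν‖ ≤ 1) :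
    ‖fderiv ℝ (fun z : EuclideanSpace ℝ (Fin 3) =>
          Complex.exp (Complex.I * ((ω * ρ * ‖x - z‖ : ℝ) : ℂ)) /
            ((4 * Real.pi * ‖x - z‖ : ℝ) : ℂ)) y ν
      - fderiv ℝ (fun z : EuclideanSpace ℝ (Fin 3) =>
          (((4 * Real.pi * ‖x - z‖ : ℝ) : ℂ))⁻¹) y ν‖
      ≤ ω ^ 2 * ρ ^ 2 / (8 * Real.pi) := by
  have ht : ‖x - y‖ ≠ 0 := norm_ne_zero_iff.2 (sub_ne_zero.2 hxy.symm)
  rw [fderiv_comp_norm_sub_apply hxy (hasDerivAt_helmholtz_profile (ω * ρ) ht),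
    fderiv_comp_norm_sub_apply hxy (hasDerivAt_laplace_profile ht), ← smul_sub, norm_smul,
    ← mul_pow]
  exact (mul_le_of_le_one_left (norm_nonneg _)
    ((norm_fderiv_norm_sub_apply_le x y ν).trans hν)).trans
      (norm_helmholtz_deriv_sub_laplace_deriv_le (ω * ρ) ht)

/-- Uniform `O(ρ²)` comparison of the gradient of the rescaled Helmholtz kernel with
that of the Laplace kernel: for `y ≠ x` and any direction `ν` with `‖ν‖ ≤ 1`,
`|D_y(e^{iωρ‖x−y‖}/(4π‖x−y‖))[ν] − D_y(1/(4π‖x−y‖))[ν]| ≤ ω²ρ²/(8π)`. -/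
theorem kernel_gradient_comparison (ω ρ : ℝ) (hω : 0 < ω) (hρ : 0 < ρ)
    (x y : EuclideanSpace ℝ (Fin 3)) (hxy : y ≠ x)
    (ν : EuclideanSpace ℝ (Fin 3)) (hν : ‖ν‖ ≤ 1) :
    ‖fderiv ℝ (fun z : EuclideanSpace ℝ (Fin 3) =>
          Complex.exp (Complex.I * ((ω * ρ * ‖x - z‖ : ℝ) : ℂ)) /
            ((4 * Real.pi * ‖x - z‖ : ℝ) : ℂ)) y ν
      - fderiv ℝ (fun z : EuclideanSpace ℝ (Fin 3) =>
          (((4 * Real.pi * ‖x - z‖ : ℝ) : ℂ))⁻¹) y ν‖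
      ≤ ω ^ 2 * ρ ^ 2 / (8 * Real.pi) :=
  kernel_gradient_comparison_general ω ρ x y hxy ν hν
end

section
/- Let ω > 0, M > 0, let μ be a finite Borel measure on ℝ³ whose support is contained in the closed ball of radius M centered at the origin, and let ψ : ℝ³ → ℂ be bounded and measurable. Define w(x) = ∫ e^{iω‖x−y‖}/(4π‖x−y‖) · ψ(y) dμ(y) for ‖x‖ > M, and define the far-field pattern A : S² → ℂ by A(θ) = (1/(4π)) ∫ e^{−iω⟨θ, y⟩} ψ(y) dμ(y). Then there exists a constant C > 0 such that for all x with ‖x‖ ≥ 4M, | w(x) − e^{iω‖x‖} A(x/‖x‖) / ‖x‖ | ≤ C / ‖x‖². -/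
/-! For `‖y‖ ≤ ‖x‖ / 4` put `R = ‖x‖`, `r = ‖x - y‖` and `s = R - ⟪x / R, y⟫`. Then `|r - R| ≤ ‖y‖`
and `r² - s² = ‖y‖² - ⟪x / R, y⟫² ∈ [0, ‖y‖²]`; since `r, s ≥ 3R/4` this gives
`0 ≤ r - s ≤ 2‖y‖² / (3R)`. So the kernel `e^{iωr} / (4πr)` differs from `e^{iωs} / (4πR)` by
`O(R⁻²)` uniformly for `y` in the support of `μ`: the amplitudes by `|1/r - 1/R|`, the phases by
`|ω| |r - s|`. Integrating the second kernel against `ψ dμ` gives exactly `e^{iωR} A(x/R) / R`. -/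

open MeasureTheory
open scoped RealInnerProductSpace

namespace Complex

theorem norm_exp_I_mul_ofReal_sub_exp_I_mul_ofReal_le (a b : ℝ) :
    ‖exp (I * a) - exp (I * b)‖ ≤ |a - b| := by
  have hfactor : exp (I * a) - exp (I * b) = exp (I * b) * (exp (I * ↑(a - b)) - 1) := by
    rw [mul_sub, mul_one, ← exp_add]
    push_cast
    ring_nf
  rw [hfactor, norm_mul, norm_exp_I_mul_ofReal, one_mul, ← Real.norm_eq_abs]
  exact Real.norm_exp_I_mul_ofReal_sub_one_le

theorem norm_exp_I_mul_ofReal_div (a c : ℝ) : ‖exp (I * a) / c‖ = |c|⁻¹ := by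
  rw [norm_div, norm_exp_I_mul_ofReal, norm_real, Real.norm_eq_abs, one_div]

theorem norm_exp_I_mul_ofReal_div_sub_exp_I_mul_ofReal_div_le (a b c d : ℝ) :
    ‖exp (I * a) / c - exp (I * b) / d‖ ≤ |c⁻¹ - d⁻¹| + |a - b| / |d| := by
  have hsplit : exp (I * a) / c - exp (I * b) / d
      = exp (I * a) * ↑(c⁻¹ - d⁻¹) + (exp (I * a) - exp (I * b)) * ↑d⁻¹ := by
    push_cast
    ring
  rw [hsplit]
  refine (norm_add_le _ _).trans (add_le_add ?_ ?_)
  · rw [norm_mul, norm_exp_I_mul_ofReal, one_mul, norm_real, Real.norm_eq_abs]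
  · rw [norm_mul, norm_real, Real.norm_eq_abs, abs_inv, ← div_eq_mul_inv]
    gcongr
    exact norm_exp_I_mul_ofReal_sub_exp_I_mul_ofReal_le a b

end Complex

open Complex

section FarField

variable {E : Type*} [NormedAddCommGroup E] [InnerProductSpace ℝ E]

theorem abs_real_inner_inv_norm_smul_left_le (x y : E) : |⟪‖x‖⁻¹ • x, y⟫| ≤ ‖y‖ := by
  calc |⟪‖x‖⁻¹ • x, y⟫| ≤ ‖‖x‖⁻¹ • x‖ * ‖y‖ := abs_real_inner_le_norm _ _
    _ ≤ 1 * ‖y‖ := by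
        gcongr
        rw [norm_smul, norm_inv, norm_norm]
        exact inv_mul_le_one
    _ = ‖y‖ := one_mul _

theorem norm_sub_sq_sub_sq_eq_norm_sq_sub_inner_sq (x y : E) :
    ‖x - y‖ ^ 2 - (‖x‖ - ⟪‖x‖⁻¹ • x, y⟫) ^ 2 = ‖y‖ ^ 2 - ⟪‖x‖⁻¹ • x, y⟫ ^ 2 := by
  have hinner : ‖x‖ * ⟪‖x‖⁻¹ • x, y⟫ = ⟪x, y⟫ := by
    rcases eq_or_ne x 0 with rfl | hx
    · simp
    · rw [real_inner_smul_left, mul_inv_cancel_left₀ (norm_ne_zero_iff.mpr hx)]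
  rw [norm_sub_sq_real, ← hinner]
  ring

theorem abs_norm_sub_sub_norm_sub_inner_le (x y : E) (hx : x ≠ 0) (hy : 4 * ‖y‖ ≤ ‖x‖) :
    |‖x - y‖ - (‖x‖ - ⟪‖x‖⁻¹ • x, y⟫)| ≤ 2 * ‖y‖ ^ 2 / (3 * ‖x‖) := by
  set r := ‖x - y‖
  set p := ⟪‖x‖⁻¹ • x, y⟫
  have hR : 0 < ‖x‖ := norm_pos_iff.mpr hx
  have hp := abs_le.mp (abs_real_inner_inv_norm_smul_left_le x y)
  have hr : ‖x‖ - ‖y‖ ≤ r := by simpa using norm_sub_norm_le x y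
  have hsq := norm_sub_sq_sub_sq_eq_norm_sq_sub_inner_sq x y
  have hdiff : 0 ≤ r - (‖x‖ - p) := by nlinarith
  rw [abs_of_nonneg hdiff, le_div_iff₀ (by positivity)]
  nlinarith

theorem norm_helmholtzKernel_sub_farField_le (ω M : ℝ) {x y : E} (hx : x ≠ 0)
    (hxM : 4 * M ≤ ‖x‖) (hyM : ‖y‖ ≤ M) :
    ‖exp (I * ↑(ω * ‖x - y‖)) / ↑(4 * Real.pi * ‖x - y‖)
        - exp (I * ↑(ω * (‖x‖ - ⟪‖x‖⁻¹ • x, y⟫))) / ↑(4 * Real.pi * ‖x‖)‖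
      ≤ (2 * M + |ω| * M ^ 2) / (6 * Real.pi) / ‖x‖ ^ 2 := by
  set r := ‖x - y‖
  set R := ‖x‖
  have hπ := Real.pi_pos
  have hR : 0 < R := norm_pos_iff.mpr hx
  have hy : 4 * ‖y‖ ≤ R := by linarith
  have hrR : |r - R| ≤ ‖y‖ := by simpa using abs_norm_sub_norm_le (x - y) x
  have hr : 3 / 4 * R ≤ r := by linarith [(abs_le.mp hrR).1]
  have hamplitude :
      |(4 * Real.pi * r)⁻¹ - (4 * Real.pi * R)⁻¹| ≤ ‖y‖ / (3 * Real.pi * R ^ 2) := by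
    have hr0 : 0 < r := by linarith
    have hsub :
        (4 * Real.pi * r)⁻¹ - (4 * Real.pi * R)⁻¹ = (R - r) / (4 * Real.pi * (r * R)) := by
      field_simp
    rw [hsub, abs_div, abs_sub_comm, abs_of_pos (a := 4 * Real.pi * (r * R)) (by positivity)]
    calc |r - R| / (4 * Real.pi * (r * R)) ≤ ‖y‖ / (4 * Real.pi * (3 / 4 * R * R)) := by gcongr
      _ = ‖y‖ / (3 * Real.pi * R ^ 2) := by ring
  have hphase : |ω * r - ω * (R - ⟪R⁻¹ • x, y⟫)| / |4 * Real.pi * R|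
      ≤ |ω| * ‖y‖ ^ 2 / (6 * Real.pi * R ^ 2) := by
    rw [← mul_sub, abs_mul, abs_of_pos (by positivity : 0 < 4 * Real.pi * R)]
    calc |ω| * |r - (R - ⟪R⁻¹ • x, y⟫)| / (4 * Real.pi * R)
        ≤ |ω| * (2 * ‖y‖ ^ 2 / (3 * R)) / (4 * Real.pi * R) := by
          gcongr
          exact abs_norm_sub_sub_norm_sub_inner_le x y hx hy
      _ = |ω| * ‖y‖ ^ 2 / (6 * Real.pi * R ^ 2) := by field_simp; ring
  calc _ ≤ _ := norm_exp_I_mul_ofReal_div_sub_exp_I_mul_ofReal_div_le _ _ _ _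
    _ ≤ ‖y‖ / (3 * Real.pi * R ^ 2) + |ω| * ‖y‖ ^ 2 / (6 * Real.pi * R ^ 2) :=
        add_le_add hamplitude hphase
    _ = (2 * ‖y‖ + |ω| * ‖y‖ ^ 2) / (6 * Real.pi) / R ^ 2 := by field_simp; ring
    _ ≤ (2 * M + |ω| * M ^ 2) / (6 * Real.pi) / R ^ 2 := by gcongr

theorem exp_mul_farField_div_eq_integral [MeasurableSpace E] {μ : Measure E} (ω : ℝ)
    (ψ : E → ℂ) (x : E) :
    exp (I * ↑(ω * ‖x‖)) * ((↑(4 * Real.pi))⁻¹ *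
        ∫ y, exp (-(I * ↑(ω * ⟪‖x‖⁻¹ • x, y⟫))) * ψ y ∂μ) / ↑‖x‖
      = ∫ y, exp (I * ↑(ω * (‖x‖ - ⟪‖x‖⁻¹ • x, y⟫))) / ↑(4 * Real.pi * ‖x‖) * ψ y ∂μ := by
  have hphase (p : ℝ) :
      exp (I * ↑(ω * (‖x‖ - p))) = exp (I * ↑(ω * ‖x‖)) * exp (-(I * ↑(ω * p))) := by
    rw [← exp_add]
    push_cast
    ring_nf
  calc _ = exp (I * ↑(ω * ‖x‖)) / ↑(4 * Real.pi * ‖x‖) *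
          ∫ y, exp (-(I * ↑(ω * ⟪‖x‖⁻¹ • x, y⟫))) * ψ y ∂μ := by
        push_cast
        ring
    _ = _ := by
        rw [← integral_const_mul]
        congr 1 with y
        rw [hphase]
        ring

end FarField

theorem potential_farfield_asymptotics_general (ω M : ℝ) (hM : 0 < M)
    (μ : Measure (EuclideanSpace ℝ (Fin 3))) [IsFiniteMeasure μ]
    (hμsupp : μ (Metric.closedBall (0 : EuclideanSpace ℝ (Fin 3)) M)ᶜ = 0)
    (ψ : EuclideanSpace ℝ (Fin 3) → ℂ) (hψm : Measurable ψ)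
    (hψb : Bornology.IsBounded (Set.range ψ))
    (w A : EuclideanSpace ℝ (Fin 3) → ℂ)
    (hw : ∀ x : EuclideanSpace ℝ (Fin 3), M < ‖x‖ →
      w x = ∫ y, (Complex.exp (Complex.I * ((ω * ‖x - y‖ : ℝ) : ℂ)) /
        ((4 * Real.pi * ‖x - y‖ : ℝ) : ℂ)) * ψ y ∂μ)
    (hA : ∀ θ : EuclideanSpace ℝ (Fin 3),
      A θ = (((4 * Real.pi : ℝ) : ℂ))⁻¹ *
        ∫ y, Complex.exp (-(Complex.I * ((ω * ⟪θ, y⟫ : ℝ) : ℂ))) * ψ y ∂μ) :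
    ∃ C : ℝ, 0 < C ∧
      ∀ x : EuclideanSpace ℝ (Fin 3), 4 * M ≤ ‖x‖ →
        ‖w x - Complex.exp (Complex.I * ((ω * ‖x‖ : ℝ) : ℂ)) * A (‖x‖⁻¹ • x)
            / ((‖x‖ : ℝ) : ℂ)‖
          ≤ C / ‖x‖ ^ 2 := by
  obtain ⟨B, hBrange⟩ := isBounded_iff_forall_norm_le.mp hψb
  have hψB : ∀ y, ‖ψ y‖ ≤ B := fun y => hBrange _ (Set.mem_range_self y)
  have hB0 : 0 ≤ B := (norm_nonneg _).trans (hψB 0)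
  have hsupp : ∀ᵐ y ∂μ, ‖y‖ ≤ M := by
    filter_upwards [compl_mem_ae_iff.mpr hμsupp] with y hy
    simpa using hy
  have hψ : Integrable ψ μ := .of_bound hψm.aestronglyMeasurable B (ae_of_all _ hψB)
  set K := (2 * M + |ω| * M ^ 2) / (6 * Real.pi)
  refine ⟨K * B * μ.real Set.univ + 1, by positivity, fun x hx => ?_⟩
  have hx0 : x ≠ 0 := norm_pos_iff.mp (by linarith)
  set f := fun y => exp (I * ↑(ω * ‖x - y‖)) / ↑(4 * Real.pi * ‖x - y‖) * ψ y
  set g := fun y => exp (I * ↑(ω * (‖x‖ - ⟪‖x‖⁻¹ • x, y⟫))) / ↑(4 * Real.pi * ‖x‖) * ψ y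
  have hdiff : ∀ᵐ y ∂μ, ‖f y - g y‖ ≤ K / ‖x‖ ^ 2 * B := by
    filter_upwards [hsupp] with y hy
    rw [← sub_mul, norm_mul]
    exact mul_le_mul (norm_helmholtzKernel_sub_farField_le ω M hx0 hx hy) (hψB y)
      (norm_nonneg _) (by positivity)
  have hg : Integrable g μ :=
    hψ.bdd_mul (by fun_prop) (ae_of_all _ fun y => (norm_exp_I_mul_ofReal_div _ _).le)
  -- `f` differs from the integrable `g` by an a.e. bounded function.
  have hf : Integrable f μ :=
    ((Integrable.of_bound (by fun_prop) _ hdiff).add hg).congr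
      (ae_of_all _ fun y => sub_add_cancel (f y) (g y))
  rw [hw x (by linarith), hA, exp_mul_farField_div_eq_integral, ← integral_sub hf hg]
  calc ‖∫ y, f y - g y ∂μ‖ ≤ K / ‖x‖ ^ 2 * B * μ.real Set.univ :=
        norm_integral_le_of_norm_le_const hdiff
    _ ≤ (K * B * μ.real Set.univ + 1) / ‖x‖ ^ 2 := by
        rw [div_mul_eq_mul_div, div_mul_eq_mul_div]
        gcongr
        linarith

/-- Far-field asymptotics of an acoustic potential: if
`w(x) = ∫ e^{iω‖x−y‖}/(4π‖x−y‖) ψ(y) dμ(y)` with `μ` a finite measure supported in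
the ball of radius `M` and `ψ` bounded measurable, and
`A(θ) = (1/(4π)) ∫ e^{−iω⟨θ,y⟩} ψ(y) dμ(y)` is the far-field pattern, then
`|w(x) − e^{iω‖x‖} A(x/‖x‖)/‖x‖| ≤ C/‖x‖²` for `‖x‖ ≥ 4M`. -/
theorem potential_farfield_asymptotics (ω M : ℝ) (hω : 0 < ω) (hM : 0 < M)
    (μ : Measure (EuclideanSpace ℝ (Fin 3))) [IsFiniteMeasure μ]
    (hμsupp : μ (Metric.closedBall (0 : EuclideanSpace ℝ (Fin 3)) M)ᶜ = 0)
    (ψ : EuclideanSpace ℝ (Fin 3) → ℂ) (hψm : Measurable ψ)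
    (hψb : Bornology.IsBounded (Set.range ψ))
    (w A : EuclideanSpace ℝ (Fin 3) → ℂ)
    (hw : ∀ x : EuclideanSpace ℝ (Fin 3), M < ‖x‖ →
      w x = ∫ y, (Complex.exp (Complex.I * ((ω * ‖x - y‖ : ℝ) : ℂ)) /
        ((4 * Real.pi * ‖x - y‖ : ℝ) : ℂ)) * ψ y ∂μ)
    (hA : ∀ θ : EuclideanSpace ℝ (Fin 3),
      A θ = (((4 * Real.pi : ℝ) : ℂ))⁻¹ *
        ∫ y, Complex.exp (-(Complex.I * ((ω * ⟪θ, y⟫ : ℝ) : ℂ))) * ψ y ∂μ) :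
    ∃ C : ℝ, 0 < C ∧
      ∀ x : EuclideanSpace ℝ (Fin 3), 4 * M ≤ ‖x‖ →
        ‖w x - Complex.exp (Complex.I * ((ω * ‖x‖ : ℝ) : ℂ)) * A (‖x‖⁻¹ • x)
            / ((‖x‖ : ℝ) : ℂ)‖
          ≤ C / ‖x‖ ^ 2 :=
  potential_farfield_asymptotics_general ω M hM μ hμsupp ψ hψm hψb w A hw hA
end

section
/- Let ω > 0, M > 0, let μ be a finite Borel measure on ℝ³ whose support is contained in the closed ball of radius M centered at the origin, and let ψ : ℝ³ → ℂ be bounded and measurable. Define w(x) = ∫ e^{iω‖x−y‖}/(4π‖x−y‖) · ψ(y) dμ(y) for ‖x‖ > M. Then w is differentiable on {x : ‖x‖ > M} and satisfies the Sommerfeld radiation condition: for every ε > 0 there exists R > 0 such that for all x with ‖x‖ ≥ R, ‖x‖ · | Dw(x)[x/‖x‖] − iω w(x) | < ε, where Dw(x)[x/‖x‖] denotes the (real) Fréchet derivative of w at x applied to the unit radial direction x/‖x‖. -/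
/-!
Write `Φ(r) = e^{iωr}/(4πr)`, so that `Φ'(r) = Φ(r) (iω - 1/r)`. Away from the support of `μ`
the kernel and its gradient are uniformly bounded, so `w` may be differentiated under the
integral sign. In the radial derivative the leading terms cancel: with `r = ‖x - y‖` and
`s = ⟪x - y, x / ‖x‖⟫` the integrand of `∂w/∂|x| - iω w` is `Φ(r) (iω (s - r) - s / r) / r`,
and `|s| ≤ r`, `r - s ≤ 2‖y‖`. Hence it is `O(‖x‖⁻²)` uniformly on the support, and
`‖x‖ (∂w/∂|x| - iω w) = O(‖x‖⁻¹)`.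
-/

open MeasureTheory Complex Real Filter Topology

/-- Written with real casts so that the integrand of `w` is literally
`helmholtzKernel ω ‖x - y‖ * ψ y`. -/
noncomputable def helmholtzKernel (ω r : ℝ) : ℂ :=
  cexp (I * ((ω * r : ℝ) : ℂ)) / ((4 * π * r : ℝ) : ℂ)

lemma hasDerivAt_helmholtzKernel (ω : ℝ) {r : ℝ} (hr : r ≠ 0) :
    HasDerivAt (helmholtzKernel ω) (helmholtzKernel ω r * (I * ω - (r : ℂ)⁻¹)) r := by
  have hexp : HasDerivAt (fun s : ℝ => cexp (I * ((ω * s : ℝ) : ℂ)))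
      (cexp (I * ((ω * r : ℝ) : ℂ)) * (I * ω)) r := by
    simpa [mul_comm, mul_left_comm] using
      ((hasDerivAt_id r).const_mul ω).ofReal_comp.const_mul I |>.cexp
  have hden : HasDerivAt (fun s : ℝ => ((4 * π * s : ℝ) : ℂ)) (4 * π) r := by
    simpa using ((hasDerivAt_id r).const_mul (4 * π)).ofReal_comp
  have hden0 : ((4 * π * r : ℝ) : ℂ) ≠ 0 := by
    exact_mod_cast mul_ne_zero (by positivity) hr
  refine (hexp.div hden hden0).congr_deriv ?_
  have hr' : (r : ℂ) ≠ 0 := by exact_mod_cast hr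
  rw [helmholtzKernel]
  push_cast at hden0 ⊢
  field_simp

lemma norm_helmholtzKernel (ω r : ℝ) : ‖helmholtzKernel ω r‖ = (4 * π * |r|)⁻¹ := by
  rw [helmholtzKernel, norm_div, norm_exp_I_mul_ofReal, norm_real, Real.norm_eq_abs,
    abs_mul, abs_of_pos (by positivity : (0 : ℝ) < 4 * π), one_div]

lemma norm_helmholtzKernel_le (ω : ℝ) {δ r : ℝ} (hδ : 0 < δ) (hr : δ ≤ r) :
    ‖helmholtzKernel ω r‖ ≤ (4 * π * δ)⁻¹ := by
  rw [norm_helmholtzKernel, abs_of_pos (hδ.trans_le hr)]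
  gcongr

@[fun_prop]
lemma measurable_helmholtzKernel (ω : ℝ) : Measurable (helmholtzKernel ω) := by
  unfold helmholtzKernel; fun_prop

section InnerProductSpace

variable {E : Type*} [NormedAddCommGroup E] [InnerProductSpace ℝ E]

lemma hasFDerivAt_norm_of_ne_zero {v : E} (hv : v ≠ 0) :
    HasFDerivAt (‖·‖) (‖v‖⁻¹ • innerSL ℝ v) v := by
  have hsq := (hasStrictFDerivAt_norm_sq v).hasFDerivAt.sqrt (by positivity)
  simp only [Real.sqrt_sq (norm_nonneg _)] at hsq
  convert hsq using 1
  ext u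
  simp only [smul_apply, coe_innerSL_apply, smul_eq_mul, one_div, mul_inv_rev, nsmul_eq_mul,
    Nat.cast_ofNat]
  field_simp

noncomputable def helmholtzKernelGrad (ω : ℝ) (u : E) : E →L[ℝ] ℂ :=
  (innerSL ℝ u).smulRight (helmholtzKernel ω ‖u‖ * (I * ω - (‖u‖ : ℂ)⁻¹) / ‖u‖)

lemma helmholtzKernelGrad_apply (ω : ℝ) (u v : E) :
    helmholtzKernelGrad ω u v =
      helmholtzKernel ω ‖u‖ * (I * ω - (‖u‖ : ℂ)⁻¹) * (inner ℝ u v / ‖u‖ : ℝ) := by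
  simp only [helmholtzKernelGrad, ContinuousLinearMap.smulRight_apply, coe_innerSL_apply, real_smul,
    ofReal_div]
  ring

lemma hasFDerivAt_helmholtzKernel_norm_sub (ω : ℝ) {x y : E} (hxy : x ≠ y) :
    HasFDerivAt (fun x => helmholtzKernel ω ‖x - y‖) (helmholtzKernelGrad ω (x - y)) x := by
  have hxy' : x - y ≠ 0 := sub_ne_zero.mpr hxy
  refine ((hasDerivAt_helmholtzKernel ω (norm_ne_zero_iff.mpr hxy')).hasFDerivAt.comp x
    ((hasFDerivAt_norm_of_ne_zero hxy').comp x (hasFDerivAt_sub_const y))).congr_fderiv ?_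
  ext v
  simp only [map_sub, ContinuousLinearMap.comp_id, ContinuousLinearMap.comp_smulₛₗ, map_inv₀,
    ringHom_apply, ContinuousLinearMap.comp_sub, smul_apply, sub_apply,
    ContinuousLinearMap.comp_apply, coe_innerSL_apply, ContinuousLinearMap.toSpanSingleton_apply,
    real_smul, ofReal_inv, helmholtzKernelGrad_apply, inner_sub_left, ofReal_div, ofReal_sub]
  ring

lemma norm_helmholtzKernelGrad_le (ω : ℝ) {δ : ℝ} {u : E} (hδ : 0 < δ) (hu : δ ≤ ‖u‖) :
    ‖helmholtzKernelGrad ω u‖ ≤ (4 * π * δ)⁻¹ * (|ω| + δ⁻¹) := by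
  have hu0 : 0 < ‖u‖ := hδ.trans_le hu
  rw [helmholtzKernelGrad, ContinuousLinearMap.norm_smulRight_apply, innerSL_apply_norm,
    norm_div, norm_mul, norm_real, Real.norm_of_nonneg hu0.le, ← mul_div_assoc,
    mul_div_cancel_left₀ _ hu0.ne']
  have hfac : ‖I * ω - (‖u‖ : ℂ)⁻¹‖ ≤ |ω| + δ⁻¹ := by
    calc ‖I * ω - (‖u‖ : ℂ)⁻¹‖ ≤ ‖I * ω‖ + ‖(‖u‖ : ℂ)⁻¹‖ := norm_sub_le _ _
      _ = |ω| + ‖u‖⁻¹ := by simp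
      _ ≤ |ω| + δ⁻¹ := by gcongr
  gcongr
  exact norm_helmholtzKernel_le ω hδ hu

lemma norm_helmholtzKernel_radiation_le (ω : ℝ) {r s : ℝ} (hr : 0 < r) (hs : |s| ≤ r) :
    ‖helmholtzKernel ω r * (I * ω - (r : ℂ)⁻¹) * ((s / r : ℝ) : ℂ) - I * ω * helmholtzKernel ω r‖
      ≤ (|ω| * (r - s) + 1) / (4 * π * r ^ 2) := by
  have hsplit : helmholtzKernel ω r * (I * ω - (r : ℂ)⁻¹) * ((s / r : ℝ) : ℂ)
      - I * ω * helmholtzKernel ω r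
      = helmholtzKernel ω r * (I * ω * ((s - r) / r : ℝ) - ((s / r ^ 2 : ℝ) : ℂ)) := by
    have hr' : (r : ℂ) ≠ 0 := by exact_mod_cast hr.ne'
    push_cast
    field_simp
    ring
  have hsr : |s| / r ^ 2 ≤ 1 / r := by
    rw [div_le_div_iff₀ (by positivity) hr]; nlinarith
  calc _ = ‖helmholtzKernel ω r‖ * ‖I * ω * ((s - r) / r : ℝ) - ((s / r ^ 2 : ℝ) : ℂ)‖ := by
        rw [hsplit, norm_mul]
    _ ≤ (4 * π * r)⁻¹ * (|ω| * ((r - s) / r) + 1 / r) := by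
        rw [norm_helmholtzKernel, abs_of_pos hr]
        gcongr
        refine (norm_sub_le _ _).trans (add_le_add ?_ ?_)
        · rw [norm_mul, norm_mul, norm_I, one_mul, norm_real, norm_real, Real.norm_eq_abs,
            Real.norm_eq_abs, abs_div, abs_of_pos hr, ← neg_sub r s, abs_neg,
            abs_of_nonneg (sub_nonneg.mpr (le_of_abs_le hs))]
        · rw [norm_real, Real.norm_eq_abs, abs_div, abs_of_pos (by positivity : 0 < r ^ 2)]
          exact hsr
    _ = (|ω| * (r - s) + 1) / (4 * π * r ^ 2) := by
        field_simp

lemma norm_inv_norm_smul_le_one (v : E) : ‖‖v‖⁻¹ • v‖ ≤ 1 := by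
  rw [norm_smul, norm_inv, norm_norm]
  exact inv_mul_le_one

lemma norm_sub_inner_normalize_le (u v : E) :
    ‖u‖ - inner ℝ u (‖v‖⁻¹ • v) ≤ 2 * ‖u - v‖ := by
  have hv : inner ℝ v (‖v‖⁻¹ • v) = ‖v‖ := by
    rw [real_inner_smul_right, real_inner_self_eq_norm_sq, pow_two, inv_mul_eq_div,
      mul_self_div_self]
  have hdiff : -‖u - v‖ ≤ inner ℝ (u - v) (‖v‖⁻¹ • v) :=
    neg_le_of_abs_le ((abs_real_inner_le_norm _ _).trans
      (mul_le_of_le_one_right (norm_nonneg _) (norm_inv_norm_smul_le_one v)))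
  have htri : ‖u‖ ≤ ‖v‖ + ‖u - v‖ := by
    simpa using norm_add_le v (u - v)
  have hsplit : inner ℝ u (‖v‖⁻¹ • v) = ‖v‖ + inner ℝ (u - v) (‖v‖⁻¹ • v) := by
    conv_lhs => rw [← sub_add_cancel u v]
    rw [inner_add_left, hv, add_comm]
  linarith

lemma norm_helmholtzKernelGrad_radial_sub_le (ω : ℝ) {x y : E} (hxy : x ≠ y) :
    ‖helmholtzKernelGrad ω (x - y) (‖x‖⁻¹ • x) - I * ω * helmholtzKernel ω ‖x - y‖‖
      ≤ (2 * |ω| * ‖y‖ + 1) / (4 * π * ‖x - y‖ ^ 2) := by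
  set r := ‖x - y‖
  set s := inner ℝ (x - y) (‖x‖⁻¹ • x)
  have hr : 0 < r := norm_pos_iff.mpr (sub_ne_zero.mpr hxy)
  have hs : |s| ≤ r := by
    exact (abs_real_inner_le_norm _ _).trans
      (mul_le_of_le_one_right hr.le (norm_inv_norm_smul_le_one x))
  have hrs : r - s ≤ 2 * ‖y‖ := by
    simpa using norm_sub_inner_normalize_le (x - y) x
  rw [helmholtzKernelGrad_apply]
  refine (norm_helmholtzKernel_radiation_le ω hr hs).trans ?_
  exact div_le_div_of_nonneg_right (by nlinarith [abs_nonneg ω]) (by positivity)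

lemma norm_smul_helmholtzKernelGrad_le (ω : ℝ) {B δ : ℝ} {b : ℂ} {u : E} (hb : ‖b‖ ≤ B)
    (hδ : 0 < δ) (hu : δ ≤ ‖u‖) :
    ‖b • helmholtzKernelGrad ω u‖ ≤ B * ((4 * π * δ)⁻¹ * (|ω| + δ⁻¹)) := by
  rw [norm_smul]
  exact mul_le_mul hb (norm_helmholtzKernelGrad_le ω hδ hu) (norm_nonneg _)
    ((norm_nonneg _).trans hb)

end InnerProductSpace

section Potential

variable {E : Type*} [NormedAddCommGroup E] [MeasurableSpace E]

noncomputable def helmholtzPotential (ω : ℝ) (μ : Measure E) (ψ : E → ℂ) (x : E) : ℂ :=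
  ∫ y, helmholtzKernel ω ‖x - y‖ * ψ y ∂μ

variable [BorelSpace E] {μ : Measure E} {ψ : E → ℂ} {B δ : ℝ} {x : E}

lemma aestronglyMeasurable_helmholtzKernel_mul (ω : ℝ) (hψ : AEStronglyMeasurable ψ μ)
    (x : E) : AEStronglyMeasurable (fun y => helmholtzKernel ω ‖x - y‖ * ψ y) μ :=
  ((measurable_helmholtzKernel ω).comp (by fun_prop)).aestronglyMeasurable.mul hψ

lemma integrable_helmholtzKernel_mul [IsFiniteMeasure μ] (ω : ℝ)
    (hψ : AEStronglyMeasurable ψ μ) (hB : ∀ᵐ y ∂μ, ‖ψ y‖ ≤ B) (hδ : 0 < δ)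
    (hsep : ∀ᵐ y ∂μ, δ ≤ ‖x - y‖) :
    Integrable (fun y => helmholtzKernel ω ‖x - y‖ * ψ y) μ := by
  refine .of_bound (aestronglyMeasurable_helmholtzKernel_mul ω hψ x) ((4 * π * δ)⁻¹ * B) ?_
  filter_upwards [hB, hsep] with y hyB hyx
  rw [norm_mul]
  exact mul_le_mul (norm_helmholtzKernel_le ω hδ hyx) hyB (norm_nonneg _) (by positivity)

variable [InnerProductSpace ℝ E] [SecondCountableTopology E]

lemma stronglyMeasurable_helmholtzKernelGrad (ω : ℝ) :
    StronglyMeasurable (helmholtzKernelGrad ω : E → E →L[ℝ] ℂ) := by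
  have hcont : Continuous fun p : E × ℂ => (innerSL ℝ p.1).smulRight p.2 :=
    (ContinuousLinearMap.smulRightL ℝ E ℂ).continuous₂.comp
      (((innerSL ℝ).continuous.comp continuous_fst).prodMk continuous_snd)
  have hpair : StronglyMeasurable fun u : E =>
      (u, helmholtzKernel ω ‖u‖ * (I * ω - (‖u‖ : ℂ)⁻¹) / ‖u‖) :=
    (measurable_id.prodMk (by fun_prop)).stronglyMeasurable
  exact (hcont.comp_stronglyMeasurable hpair :)

lemma aestronglyMeasurable_smul_helmholtzKernelGrad (ω : ℝ) (hψ : AEStronglyMeasurable ψ μ)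
    (x : E) : AEStronglyMeasurable (fun y => ψ y • helmholtzKernelGrad ω (x - y)) μ :=
  hψ.smul ((stronglyMeasurable_helmholtzKernelGrad ω).comp_measurable
    (measurable_const.sub measurable_id)).aestronglyMeasurable

lemma integrable_smul_helmholtzKernelGrad [IsFiniteMeasure μ] (ω : ℝ)
    (hψ : AEStronglyMeasurable ψ μ) (hB : ∀ᵐ y ∂μ, ‖ψ y‖ ≤ B) (hδ : 0 < δ)
    (hsep : ∀ᵐ y ∂μ, δ ≤ ‖x - y‖) :
    Integrable (fun y => ψ y • helmholtzKernelGrad ω (x - y)) μ := by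
  refine .of_bound (aestronglyMeasurable_smul_helmholtzKernelGrad ω hψ x)
    (B * ((4 * π * δ)⁻¹ * (|ω| + δ⁻¹))) ?_
  filter_upwards [hB, hsep] with y hyB hyx
  exact norm_smul_helmholtzKernelGrad_le ω hyB hδ hyx

lemma hasFDerivAt_helmholtzPotential [IsFiniteMeasure μ] (ω : ℝ)
    (hψ : AEStronglyMeasurable ψ μ) (hB : ∀ᵐ y ∂μ, ‖ψ y‖ ≤ B) (hδ : 0 < δ)
    (hsep : ∀ᵐ y ∂μ, δ ≤ ‖x - y‖) :
    HasFDerivAt (helmholtzPotential ω μ ψ)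
      (∫ y, ψ y • helmholtzKernelGrad ω (x - y) ∂μ) x := by
  have hnear : ∀ᵐ y ∂μ, ∀ x' ∈ Metric.ball x (δ / 2), δ / 2 ≤ ‖x' - y‖ := by
    filter_upwards [hsep] with y hy x' hx'
    rw [Metric.mem_ball, dist_eq_norm] at hx'
    linarith [norm_sub_le_norm_sub_add_norm_sub x x' y, norm_sub_rev x x']
  refine hasFDerivAt_integral_of_dominated_of_fderiv_le
    (F := fun x y => helmholtzKernel ω ‖x - y‖ * ψ y)
    (F' := fun x y => ψ y • helmholtzKernelGrad ω (x - y)) (Metric.ball_mem_nhds x (half_pos hδ))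
    (.of_forall (aestronglyMeasurable_helmholtzKernel_mul ω hψ))
    (integrable_helmholtzKernel_mul ω hψ hB hδ hsep)
    (aestronglyMeasurable_smul_helmholtzKernelGrad ω hψ x) ?_
    (integrable_const (B * ((4 * π * (δ / 2))⁻¹ * (|ω| + (δ / 2)⁻¹)))) ?_
  · filter_upwards [hB, hnear] with y hyB hy x' hx'
    exact norm_smul_helmholtzKernelGrad_le ω hyB (half_pos hδ) (hy x' hx')
  · filter_upwards [hnear] with y hy x' hx'
    have hx'y : x' ≠ y := sub_ne_zero.mp (norm_pos_iff.mp ((half_pos hδ).trans_le (hy x' hx')))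
    exact (hasFDerivAt_helmholtzKernel_norm_sub ω hx'y).mul_const (ψ y)

lemma norm_fderiv_helmholtzPotential_radial_sub_le [IsFiniteMeasure μ] (ω : ℝ) {M : ℝ}
    (hψ : AEStronglyMeasurable ψ μ) (hB : ∀ᵐ y ∂μ, ‖ψ y‖ ≤ B) (hsupp : ∀ᵐ y ∂μ, ‖y‖ ≤ M)
    (hx0 : 0 < ‖x‖) (hxM : 2 * M ≤ ‖x‖) :
    ‖fderiv ℝ (helmholtzPotential ω μ ψ) x (‖x‖⁻¹ • x) - I * ω * helmholtzPotential ω μ ψ x‖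
      ≤ B * (2 * |ω| * M + 1) / (π * ‖x‖ ^ 2) * μ.real Set.univ := by
  have hδ : 0 < ‖x‖ / 2 := half_pos hx0
  have hsep : ∀ᵐ y ∂μ, ‖x‖ / 2 ≤ ‖x - y‖ := by
    filter_upwards [hsupp] with y hy
    linarith [norm_sub_norm_le x y]
  have hgrad := integrable_smul_helmholtzKernelGrad ω hψ hB hδ hsep
  have hker := integrable_helmholtzKernel_mul ω hψ hB hδ hsep
  have hdefect : fderiv ℝ (helmholtzPotential ω μ ψ) x (‖x‖⁻¹ • x)
        - I * ω * helmholtzPotential ω μ ψ x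
      = ∫ y, ψ y * (helmholtzKernelGrad ω (x - y) (‖x‖⁻¹ • x)
        - I * ω * helmholtzKernel ω ‖x - y‖) ∂μ := by
    rw [(hasFDerivAt_helmholtzPotential ω hψ hB hδ hsep).fderiv,
      ContinuousLinearMap.integral_apply hgrad, helmholtzPotential, ← integral_const_mul,
      ← integral_sub (hgrad.apply_continuousLinearMap _) (hker.const_mul _)]
    congr 1 with y
    simp only [FunLike.coe_smul, Pi.smul_apply, smul_eq_mul]
    ring
  rw [hdefect]
  apply norm_integral_le_of_norm_le_const
  filter_upwards [hB, hsupp, hsep] with y hyB hy hyx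
  have hxy : x ≠ y := sub_ne_zero.mp (norm_pos_iff.mp (hδ.trans_le hyx))
  rw [norm_mul]
  refine mul_le_mul hyB ((norm_helmholtzKernelGrad_radial_sub_le ω hxy).trans ?_)
    (norm_nonneg _) ((norm_nonneg _).trans hyB) |>.trans_eq (mul_div_assoc _ _ _).symm
  have hM : 0 ≤ M := (norm_nonneg y).trans hy
  refine div_le_div₀ (by positivity) (by gcongr) (by positivity) ?_
  have hsq : ‖x‖ ^ 2 ≤ 4 * ‖x - y‖ ^ 2 := by nlinarith [norm_nonneg x]
  nlinarith [mul_le_mul_of_nonneg_left hsq pi_pos.le]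

lemma tendsto_norm_mul_fderiv_helmholtzPotential_radial_sub [IsFiniteMeasure μ] (ω : ℝ)
    {M : ℝ} (hψ : AEStronglyMeasurable ψ μ) (hB : ∀ᵐ y ∂μ, ‖ψ y‖ ≤ B)
    (hsupp : ∀ᵐ y ∂μ, ‖y‖ ≤ M) :
    Tendsto (fun x => ‖x‖ * ‖fderiv ℝ (helmholtzPotential ω μ ψ) x (‖x‖⁻¹ • x)
      - I * ω * helmholtzPotential ω μ ψ x‖) (Bornology.cobounded E) (𝓝 0) := by
  set C := B * (2 * |ω| * M + 1) / π * μ.real Set.univ with hC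
  have hlim : Tendsto (fun x : E => C * ‖x‖⁻¹) (Bornology.cobounded E) (𝓝 0) := by
    simpa using (tendsto_inv_atTop_zero.comp tendsto_norm_cobounded_atTop).const_mul C
  refine squeeze_zero' (.of_forall fun x => by positivity) ?_ hlim
  filter_upwards [tendsto_norm_cobounded_atTop.eventually_gt_atTop (max (2 * M) 0)] with x hx
  have hx0 : 0 < ‖x‖ := (le_max_right _ _).trans_lt hx
  refine (mul_le_mul_of_nonneg_left (norm_fderiv_helmholtzPotential_radial_sub_le ω hψ hB hsupp
    hx0 ((le_max_left _ _).trans hx.le)) hx0.le).trans_eq ?_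
  rw [hC]
  field_simp

end Potential

theorem potential_sommerfeld_radiation_general (ω M : ℝ)
    (μ : Measure (EuclideanSpace ℝ (Fin 3))) [IsFiniteMeasure μ]
    (hμsupp : μ (Metric.closedBall (0 : EuclideanSpace ℝ (Fin 3)) M)ᶜ = 0)
    (ψ : EuclideanSpace ℝ (Fin 3) → ℂ) (hψm : Measurable ψ)
    (hψb : Bornology.IsBounded (Set.range ψ))
    (w : EuclideanSpace ℝ (Fin 3) → ℂ)
    (hw : ∀ x : EuclideanSpace ℝ (Fin 3), M < ‖x‖ →
      w x = ∫ y, (Complex.exp (Complex.I * ((ω * ‖x - y‖ : ℝ) : ℂ)) /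
        ((4 * Real.pi * ‖x - y‖ : ℝ) : ℂ)) * ψ y ∂μ) :
    (∀ x : EuclideanSpace ℝ (Fin 3), M < ‖x‖ → DifferentiableAt ℝ w x) ∧
    ∀ ε : ℝ, 0 < ε → ∃ R : ℝ, 0 < R ∧
      ∀ x : EuclideanSpace ℝ (Fin 3), R ≤ ‖x‖ →
        ‖x‖ * ‖fderiv ℝ w x (‖x‖⁻¹ • x) - Complex.I * ((ω : ℝ) : ℂ) * w x‖ < ε := by
  obtain ⟨B, hB⟩ := isBounded_iff_forall_norm_le.mp hψb
  have hψB : ∀ᵐ y ∂μ, ‖ψ y‖ ≤ B := .of_forall fun y => hB _ ⟨y, rfl⟩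
  have hsupp : ∀ᵐ y ∂μ, ‖y‖ ≤ M :=
    measure_eq_zero_iff_ae_notMem.mp hμsupp |>.mono fun _ hy => by simpa using hy
  have hw_eq : ∀ x, M < ‖x‖ → w =ᶠ[𝓝 x] helmholtzPotential ω μ ψ := fun x hx =>
    eventually_of_mem ((isOpen_lt continuous_const continuous_norm).mem_nhds hx) hw
  refine ⟨fun x hx => ?_, fun ε hε => ?_⟩
  · have hsep : ∀ᵐ y ∂μ, ‖x‖ - M ≤ ‖x - y‖ :=
      hsupp.mono fun y hy => by linarith [norm_sub_norm_le x y]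
    exact ((hasFDerivAt_helmholtzPotential ω hψm.aestronglyMeasurable hψB (sub_pos.mpr hx)
      hsep).congr_of_eventuallyEq (hw_eq x hx)).differentiableAt
  have hfar : ∀ᶠ x in Bornology.cobounded _, M < ‖x‖ ∧
      ‖x‖ * ‖fderiv ℝ (helmholtzPotential ω μ ψ) x (‖x‖⁻¹ • x)
        - I * ω * helmholtzPotential ω μ ψ x‖ < ε :=
    (tendsto_norm_cobounded_atTop.eventually_gt_atTop M).and
      ((tendsto_norm_mul_fderiv_helmholtzPotential_radial_sub ω hψm.aestronglyMeasurable hψB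
        hsupp).eventually (gt_mem_nhds hε))
  obtain ⟨R, -, hR⟩ := hasBasis_cobounded_norm.eventually_iff.mp hfar
  refine ⟨max R 1, by positivity, fun x hx => ?_⟩
  obtain ⟨hxM, hxε⟩ := hR (show R ≤ ‖x‖ from (le_max_left _ _).trans hx)
  rwa [(hw_eq x hxM).fderiv_eq, (hw_eq x hxM).eq_of_nhds]

/-- The acoustic potential `w(x) = ∫ e^{iω‖x−y‖}/(4π‖x−y‖) ψ(y) dμ(y)` generated by a
finite measure supported in the ball of radius `M` and a bounded measurable density is
differentiable for `‖x‖ > M` and satisfies the Sommerfeld radiation condition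
`lim_{|x|→∞} |x| (∂w/∂|x| − iω w) = 0`. -/
theorem potential_sommerfeld_radiation (ω M : ℝ) (hω : 0 < ω) (hM : 0 < M)
    (μ : Measure (EuclideanSpace ℝ (Fin 3))) [IsFiniteMeasure μ]
    (hμsupp : μ (Metric.closedBall (0 : EuclideanSpace ℝ (Fin 3)) M)ᶜ = 0)
    (ψ : EuclideanSpace ℝ (Fin 3) → ℂ) (hψm : Measurable ψ)
    (hψb : Bornology.IsBounded (Set.range ψ))
    (w : EuclideanSpace ℝ (Fin 3) → ℂ)
    (hw : ∀ x : EuclideanSpace ℝ (Fin 3), M < ‖x‖ →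
      w x = ∫ y, (Complex.exp (Complex.I * ((ω * ‖x - y‖ : ℝ) : ℂ)) /
        ((4 * Real.pi * ‖x - y‖ : ℝ) : ℂ)) * ψ y ∂μ) :
    (∀ x : EuclideanSpace ℝ (Fin 3), M < ‖x‖ → DifferentiableAt ℝ w x) ∧
    ∀ ε : ℝ, 0 < ε → ∃ R : ℝ, 0 < R ∧
      ∀ x : EuclideanSpace ℝ (Fin 3), R ≤ ‖x‖ →
        ‖x‖ * ‖fderiv ℝ w x (‖x‖⁻¹ • x) - Complex.I * ((ω : ℝ) : ℂ) * w x‖ < ε :=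
  potential_sommerfeld_radiation_general ω M μ hμsupp ψ hψm hψb w hw
end
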